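/- arXiv:2601.04965 — 12 statements merged into one kernel-verified Lean document; each statement's English description precedes it below -/
import Mathlib

section
/- Let m, n ≥ 1 and A, B be n×n real symmetric matrices with B having zero diagonal. If the monic x-symmetric biquadratic form P(x,y) = (xᵀx)(yᵀy) + ((𝟙ᵀx)² − xᵀx)(yᵀAy) + (xᵀx)(yᵀBy) is nonnegative for all x ∈ ℝ^m, y ∈ ℝ^n, then there exist finitely many m×n real matrices W₁,…,W_r such that P(x,y) = Σ_p (xᵀ W_p y)² for all x, y. -/
open Matrix

lemma quadForm_transpose_mul_self {n : ℕ} (C : Matrix (Fin n) (Fin n) ℝ) (y : Fin n → ℝ) :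
    y ⬝ᵥ (Cᵀ * C).mulVec y = ∑ p, (C.mulVec y p) ^ 2 := by
  rw [← mulVec_mulVec, dotProduct_mulVec, vecMul_transpose, dotProduct]
  simp [sq]

open scoped MatrixOrder in
lemma posSemidef_iff_eq_transpose_mul_self {n : ℕ} {A : Matrix (Fin n) (Fin n) ℝ} :
    A.PosSemidef ↔ ∃ B : Matrix (Fin n) (Fin n) ℝ, A = Bᴴ * B := by
  constructor
  · intro hA
    have h0 : 0 ≤ A := hA.nonneg
    refine ⟨CFC.sqrt A, ?_⟩
    rw [← star_eq_conjTranspose, (CFC.sqrt_nonneg A).isSelfAdjoint.star_eq]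
    exact (CFC.sqrt_mul_sqrt_self A h0).symm
  · rintro ⟨B, rfl⟩
    exact posSemidef_conjTranspose_mul_self B

lemma sum_sq_pairs {m : ℕ} (x : Fin m → ℝ) :
    ∑ i, ∑ j, (x i - x j) ^ 2 = 2 * m * (x ⬝ᵥ x) - 2 * (∑ i, x i) ^ 2 := by
  have h : ∀ i : Fin m, ∑ j, (x i - x j) ^ 2
      = m * (x i * x i) + (x ⬝ᵥ x) - 2 * x i * (∑ j, x j) := by
    intro i
    have : ∀ j, (x i - x j) ^ 2 = x i * x i + x j * x j - 2 * (x i * x j) := by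
      intro j; ring
    simp only [this, Finset.sum_sub_distrib, Finset.sum_add_distrib, Finset.sum_const,
      Finset.card_univ, Fintype.card_fin, nsmul_eq_mul, ← Finset.mul_sum, dotProduct]
    ring
  simp only [h, Finset.sum_sub_distrib, Finset.sum_add_distrib, Finset.sum_const,
    Finset.card_univ, Fintype.card_fin, nsmul_eq_mul, ← Finset.mul_sum, ← Finset.sum_mul,
    dotProduct]
  ring

lemma triple_sum_factor {m n : ℕ} (f : Fin m → Fin m → ℝ) (g : Fin n → ℝ) (K : ℝ) :
    ∑ i, ∑ j, ∑ p, K * f i j * g p = K * (∑ i, ∑ j, f i j) * (∑ p, g p) := by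
  simp only [← Finset.mul_sum, ← Finset.sum_mul]

theorem stmt_1 (m n : ℕ) (hm : 1 ≤ m) (hn : 1 ≤ n)
    (A B : Matrix (Fin n) (Fin n) ℝ) (hA : A.IsSymm) (hB : B.IsSymm)
    (hBdiag : ∀ j, B j j = 0)
    (hpsd : ∀ (x : Fin m → ℝ) (y : Fin n → ℝ),
        0 ≤ (x ⬝ᵥ x) * (y ⬝ᵥ y)
            + ((∑ i, x i) ^ 2 - x ⬝ᵥ x) * (y ⬝ᵥ A.mulVec y)
            + (x ⬝ᵥ x) * (y ⬝ᵥ B.mulVec y)) :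
    ∃ (r : ℕ) (W : Fin r → Matrix (Fin m) (Fin n) ℝ),
      ∀ (x : Fin m → ℝ) (y : Fin n → ℝ),
        (x ⬝ᵥ x) * (y ⬝ᵥ y)
            + ((∑ i, x i) ^ 2 - x ⬝ᵥ x) * (y ⬝ᵥ A.mulVec y)
            + (x ⬝ᵥ x) * (y ⬝ᵥ B.mulVec y)
          = ∑ p, (x ⬝ᵥ (W p).mulVec y) ^ 2 := by
  classical
  have hmR : (0:ℝ) < m := by exact_mod_cast Nat.lt_of_lt_of_le Nat.zero_lt_one hm
  have hmne : (m:ℝ) ≠ 0 := ne_of_gt hmR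
  set S₂ : Matrix (Fin n) (Fin n) ℝ := 1 + B + ((m:ℝ) - 1) • A with hS₂def
  have hq2 : ∀ y : Fin n → ℝ, y ⬝ᵥ S₂.mulVec y
      = y ⬝ᵥ y + y ⬝ᵥ B.mulVec y + ((m:ℝ) - 1) * (y ⬝ᵥ A.mulVec y) := by
    intro y
    simp only [hS₂def, add_mulVec, smul_mulVec, one_mulVec, dotProduct_add,
      dotProduct_smul, smul_eq_mul]
  -- S₂ is PSD
  have hS₂psd : S₂.PosSemidef := by
    rw [posSemidef_iff_dotProduct_mulVec]; constructor
    · rw [Matrix.IsHermitian, conjTranspose_eq_transpose_of_trivial]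
      simp [hS₂def, transpose_add, transpose_smul, hA.eq, hB.eq]
    · intro y
      have h := hpsd (fun _ => 1) y
      simp only [dotProduct, Finset.sum_const, Finset.card_univ, Fintype.card_fin,
        nsmul_eq_mul, mul_one, one_mul] at h
      simp only [star_trivial]
      rw [hq2 y]
      simp only [dotProduct] at h ⊢
      nlinarith [h, hmR]
  -- C₁ : handles the (I + B - A) part (trivial when m = 1)
  obtain ⟨C₁, hC₁⟩ : ∃ C₁ : Matrix (Fin n) (Fin n) ℝ,
      ∀ (x : Fin m → ℝ) (y : Fin n → ℝ),
        ((m:ℝ) * (x ⬝ᵥ x) - (∑ i, x i) ^ 2) * (y ⬝ᵥ (C₁ᵀ * C₁).mulVec y)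
          = ((m:ℝ) * (x ⬝ᵥ x) - (∑ i, x i) ^ 2)
              * (y ⬝ᵥ y + y ⬝ᵥ B.mulVec y - y ⬝ᵥ A.mulVec y) := by
    rcases eq_or_lt_of_le hm with h1 | h2
    · refine ⟨0, fun x y => ?_⟩
      have : (m:ℝ) * (x ⬝ᵥ x) - (∑ i, x i) ^ 2 = 0 := by
        subst h1
        simp only [dotProduct, Fin.sum_univ_one, Nat.cast_one]
        ring
      rw [this]; ring
    · -- m ≥ 2 : show 1 + B - A is PSD
      have hq1 : ∀ y : Fin n → ℝ, y ⬝ᵥ (1 + B - A).mulVec y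
          = y ⬝ᵥ y + y ⬝ᵥ B.mulVec y - y ⬝ᵥ A.mulVec y := by
        intro y
        simp only [sub_mulVec, add_mulVec, one_mulVec, dotProduct_add, dotProduct_sub]
      have hpsd1 : (1 + B - A : Matrix (Fin n) (Fin n) ℝ).PosSemidef := by
        rw [posSemidef_iff_dotProduct_mulVec]; constructor
        · rw [Matrix.IsHermitian, conjTranspose_eq_transpose_of_trivial]
          simp [transpose_add, transpose_sub, hA.eq, hB.eq]
        · intro y
          set i0 : Fin m := ⟨0, by omega⟩
          set i1 : Fin m := ⟨1, by omega⟩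
          have hne : i0 ≠ i1 := by simp [i0, i1, Fin.ext_iff]
          set x : Fin m → ℝ :=
            fun a => (if a = i0 then (1:ℝ) else 0) - (if a = i1 then 1 else 0) with hxdef
          have hs : (∑ i, x i) = 0 := by
            simp [hxdef, Finset.sum_sub_distrib, Finset.sum_ite_eq']
          have ht : x ⬝ᵥ x = 2 := by
            have hpt : ∀ a, x a * x a
                = (if a = i0 then (1:ℝ) else 0) + (if a = i1 then 1 else 0) := by
              intro a
              simp only [hxdef]
              by_cases h0 : a = i0 <;> by_cases hh1 : a = i1
              · exact absurd (h0 ▸ hh1) hne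
              · simp [h0, hh1, hne, Ne.symm hne]
              · simp [h0, hh1, hne, Ne.symm hne]
              · simp [h0, hh1, hne, Ne.symm hne]
            rw [dotProduct]
            simp only [hpt, Finset.sum_add_distrib, Finset.sum_ite_eq', Finset.mem_univ,
              if_true]
            norm_num
          have h := hpsd x y
          rw [hs, ht] at h
          simp only [star_trivial]
          rw [hq1 y]
          nlinarith [h]
      obtain ⟨C, hC⟩ := posSemidef_iff_eq_transpose_mul_self.mp hpsd1
      rw [conjTranspose_eq_transpose_of_trivial] at hC
      refine ⟨C, fun x y => ?_⟩
      rw [← hC, hq1 y]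
  -- factor S₂
  obtain ⟨C₂, hC₂⟩ := posSemidef_iff_eq_transpose_mul_self.mp hS₂psd
  rw [conjTranspose_eq_transpose_of_trivial] at hC₂
  -- the family of matrices
  set W' : (Fin n ⊕ (Fin m × Fin m × Fin n)) → Matrix (Fin m) (Fin n) ℝ :=
    Sum.elim
      (fun p => Matrix.of fun _ b => Real.sqrt (1/m) * C₂ p b)
      (fun q => Matrix.of fun a b => Real.sqrt (1/(2*m))
          * ((if a = q.1 then 1 else 0) - (if a = q.2.1 then 1 else 0)) * C₁ q.2.2 b)
    with hW'def
  set e := Fintype.equivFin (Fin n ⊕ (Fin m × Fin m × Fin n)) with hedef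
  refine ⟨_, fun q => W' (e.symm q), fun x y => ?_⟩
  have hre : ∑ p, (x ⬝ᵥ (W' (e.symm p)).mulVec y) ^ 2
      = ∑ q, (x ⬝ᵥ (W' q).mulVec y) ^ 2 :=
    e.symm.sum_comp (fun q => (x ⬝ᵥ (W' q).mulVec y) ^ 2)
  rw [hre, Fintype.sum_sum_type]
  -- value on the first family
  have hval1 : ∀ p : Fin n, x ⬝ᵥ (W' (Sum.inl p)).mulVec y
      = Real.sqrt (1/m) * (∑ i, x i) * (C₂.mulVec y p) := by
    intro p
    have hinner : ∀ a, (W' (Sum.inl p)).mulVec y a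
        = Real.sqrt (1/m) * C₂.mulVec y p := by
      intro a
      simp only [hW'def, Sum.elim_inl, mulVec, dotProduct, Matrix.of_apply]
      rw [Finset.mul_sum]
      exact Finset.sum_congr rfl fun b _ => by ring
    rw [dotProduct]
    simp only [hinner]
    rw [← Finset.sum_mul]
    ring
  -- value on the second family
  have hval2 : ∀ (i j : Fin m) (p : Fin n),
      x ⬝ᵥ (W' (Sum.inr (i, j, p))).mulVec y
        = Real.sqrt (1/(2*m)) * (x i - x j) * (C₁.mulVec y p) := by
    intro i j p
    have hinner : ∀ a, (W' (Sum.inr (i, j, p))).mulVec y a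
        = Real.sqrt (1/(2*m)) * ((if a = i then (1:ℝ) else 0) - (if a = j then 1 else 0))
            * C₁.mulVec y p := by
      intro a
      simp only [hW'def, Sum.elim_inr, mulVec, dotProduct, Matrix.of_apply]
      rw [Finset.mul_sum]
      exact Finset.sum_congr rfl fun b _ => by ring
    rw [dotProduct]
    simp only [hinner]
    have hsplit : ∀ a, x a * (Real.sqrt (1/(2*m))
        * ((if a = i then (1:ℝ) else 0) - (if a = j then 1 else 0)) * C₁.mulVec y p)
        = (Real.sqrt (1/(2*m)) * C₁.mulVec y p)
            * ((if a = i then x a else 0) - (if a = j then x a else 0)) := by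
      intro a
      split_ifs <;> ring
    simp only [hsplit]
    rw [← Finset.mul_sum]
    simp only [Finset.sum_sub_distrib, Finset.sum_ite_eq', Finset.mem_univ, if_true]
    ring
  have hsq1 : (0:ℝ) ≤ 1/m := by positivity
  have hsq2 : (0:ℝ) ≤ 1/(2*m) := by positivity
  have hpart1 : ∑ p : Fin n, (x ⬝ᵥ (W' (Sum.inl p)).mulVec y) ^ 2
      = 1/m * (∑ i, x i) ^ 2 * (y ⬝ᵥ S₂.mulVec y) := by
    simp only [hval1, mul_pow, Real.sq_sqrt hsq1]
    rw [hC₂, quadForm_transpose_mul_self, Finset.mul_sum]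
  have hpart2 : ∑ q : Fin m × Fin m × Fin n, (x ⬝ᵥ (W' (Sum.inr q)).mulVec y) ^ 2
      = 1/(2*m) * (∑ i, ∑ j, (x i - x j) ^ 2) * (y ⬝ᵥ (C₁ᵀ * C₁).mulVec y) := by
    rw [Fintype.sum_prod_type]
    simp only [Fintype.sum_prod_type, hval2, mul_pow, Real.sq_sqrt hsq2]
    rw [quadForm_transpose_mul_self]
    exact triple_sum_factor (fun i j => (x i - x j) ^ 2) (fun p => (C₁.mulVec y p) ^ 2)
      (1/(2*(m:ℝ)))
  rw [hpart1, hpart2, sum_sq_pairs, hq2 y]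
  have hγ := hC₁ x y
  field_simp
  linear_combination (-1:ℝ) * hγ
end

section
/- Let Q, R be n×n real symmetric matrices and M = I_m ⊗ Q + (1/m)(𝟙𝟙ᵀ) ⊗ (R − Q). For any z ∈ ℝ^{mn} partitioned into blocks z₁,…,z_m ∈ ℝ^n with s = Σᵢ zᵢ, it holds that zᵀMz = Σᵢ (zᵢ − s/m)ᵀ Q (zᵢ − s/m) + (1/m) sᵀ R s. -/
open Matrix
open scoped Kronecker

theorem stmt_3 (m n : ℕ) (hm : 0 < m)
    (Q R : Matrix (Fin n) (Fin n) ℝ) (hQs : Q.IsSymm) (hRs : R.IsSymm)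
    (z : Fin m × Fin n → ℝ) :
    z ⬝ᵥ ((1 : Matrix (Fin m) (Fin m) ℝ) ⊗ₖ Q
        + ((1 / (m : ℝ)) • (Matrix.of fun (_ _ : Fin m) => (1 : ℝ))) ⊗ₖ (R - Q)).mulVec z
      = (∑ i : Fin m,
          (fun j => z (i, j) - (∑ k : Fin m, z (k, j)) / m) ⬝ᵥ
            Q.mulVec (fun j => z (i, j) - (∑ k : Fin m, z (k, j)) / m))
        + (1 / (m : ℝ)) *
          ((fun j => ∑ k : Fin m, z (k, j)) ⬝ᵥ R.mulVec (fun j => ∑ k : Fin m, z (k, j))) := by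
  have hm' : (m : ℝ) ≠ 0 := Nat.cast_ne_zero.mpr hm.ne'
  set s : Fin n → ℝ := fun j => ∑ k : Fin m, z (k, j) with hs
  set zx : Fin m → Fin n → ℝ := fun i j => z (i, j) with hzx
  -- LHS expansion
  have lhs_eq : z ⬝ᵥ ((1 : Matrix (Fin m) (Fin m) ℝ) ⊗ₖ Q
        + ((1 / (m : ℝ)) • (Matrix.of fun (_ _ : Fin m) => (1 : ℝ))) ⊗ₖ (R - Q)).mulVec z
      = (∑ i : Fin m, zx i ⬝ᵥ Q.mulVec (zx i))
        + (1 / (m : ℝ)) * (s ⬝ᵥ (R - Q).mulVec s) := by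
    rw [add_mulVec, dotProduct_add]
    congr 1
    · simp only [dotProduct, mulVec, kroneckerMap_apply, Matrix.one_apply,
        Fintype.sum_prod_type, ite_mul, one_mul, zero_mul, hzx]
      refine Finset.sum_congr rfl fun x _ => Finset.sum_congr rfl fun x1 _ => ?_
      rw [Finset.sum_comm]
      simp [mul_ite, mul_zero, mul_assoc]
    · simp only [dotProduct, mulVec, kroneckerMap_apply, Matrix.smul_apply, Matrix.sub_apply,
        Matrix.of_apply, Fintype.sum_prod_type, smul_eq_mul, mul_one, hs]
      have inner : ∀ x1 : Fin n, (∑ x2 : Fin m, ∑ x3 : Fin n,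
          1 / (m:ℝ) * (R x1 x3 - Q x1 x3) * z (x2, x3))
          = 1 / (m:ℝ) * ∑ x3 : Fin n, (R x1 x3 - Q x1 x3) * ∑ k : Fin m, z (k, x3) := by
        intro x1
        rw [Finset.sum_comm, Finset.mul_sum]
        refine Finset.sum_congr rfl fun x3 _ => ?_
        rw [Finset.mul_sum, Finset.mul_sum]
        refine Finset.sum_congr rfl fun x2 _ => by ring
      simp only [inner]
      rw [Finset.sum_comm, Finset.mul_sum]
      refine Finset.sum_congr rfl fun x1 _ => ?_
      rw [← Finset.sum_mul]
      ring
  rw [lhs_eq]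
  have rhs1 : ∀ i : Fin m, (fun j => z (i, j) - (∑ k : Fin m, z (k, j)) / m)
      = zx i - (1 / (m:ℝ)) • s := by
    intro i; funext j; simp [hzx, hs, div_eq_mul_inv, mul_comm]
  have key : ∀ i : Fin m, (zx i - (1 / (m:ℝ)) • s) ⬝ᵥ Q.mulVec (zx i - (1 / (m:ℝ)) • s)
      = zx i ⬝ᵥ Q.mulVec (zx i) - (1/(m:ℝ)) * (zx i ⬝ᵥ Q.mulVec s)
        - (1/(m:ℝ)) * (s ⬝ᵥ Q.mulVec (zx i)) + (1/(m:ℝ))^2 * (s ⬝ᵥ Q.mulVec s) := by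
    intro i
    simp only [sub_dotProduct, dotProduct_sub, mulVec_sub, mulVec_smul, smul_dotProduct,
      dotProduct_smul, smul_eq_mul]
    ring
  have hsum1 : ∑ i : Fin m, (zx i ⬝ᵥ Q.mulVec s) = s ⬝ᵥ Q.mulVec s := by
    simp only [dotProduct, hzx, hs]
    rw [Finset.sum_comm]
    exact Finset.sum_congr rfl fun j _ => by rw [← Finset.sum_mul]
  have hsum2 : ∑ i : Fin m, (s ⬝ᵥ Q.mulVec (zx i)) = s ⬝ᵥ Q.mulVec s := by
    simp only [dotProduct, mulVec, hzx, hs]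
    rw [Finset.sum_comm]
    refine Finset.sum_congr rfl fun j _ => ?_
    rw [← Finset.mul_sum, Finset.sum_comm]
    congr 1
    exact Finset.sum_congr rfl fun l _ => by rw [← Finset.mul_sum]
  calc (∑ i : Fin m, zx i ⬝ᵥ Q.mulVec (zx i)) + (1 / (m : ℝ)) * (s ⬝ᵥ (R - Q).mulVec s)
      = (∑ i : Fin m, zx i ⬝ᵥ Q.mulVec (zx i)) - (1/(m:ℝ)) * (s ⬝ᵥ Q.mulVec s)
        + (1 / (m:ℝ)) * (s ⬝ᵥ R.mulVec s) := by
        simp only [sub_mulVec, dotProduct_sub]; ring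
    _ = (∑ i : Fin m,
          (fun j => z (i, j) - (∑ k : Fin m, z (k, j)) / m) ⬝ᵥ
            Q.mulVec (fun j => z (i, j) - (∑ k : Fin m, z (k, j)) / m))
        + (1 / (m : ℝ)) * (s ⬝ᵥ R.mulVec s) := by
        congr 1
        rw [sub_eq_iff_eq_add]
        have : ∀ i : Fin m, (fun j => z (i, j) - (∑ k : Fin m, z (k, j)) / m) ⬝ᵥ
            Q.mulVec (fun j => z (i, j) - (∑ k : Fin m, z (k, j)) / m)
            = zx i ⬝ᵥ Q.mulVec (zx i) - (1/(m:ℝ)) * (zx i ⬝ᵥ Q.mulVec s)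
              - (1/(m:ℝ)) * (s ⬝ᵥ Q.mulVec (zx i)) + (1/(m:ℝ))^2 * (s ⬝ᵥ Q.mulVec s) := by
          intro i; rw [rhs1 i, key i]
        rw [Finset.sum_congr rfl fun i _ => this i]
        rw [Finset.sum_add_distrib, Finset.sum_sub_distrib, Finset.sum_sub_distrib,
          ← Finset.mul_sum, ← Finset.mul_sum, hsum1, hsum2, Finset.sum_const,
          Finset.card_univ, Fintype.card_fin, nsmul_eq_mul]
        field_simp
        ring
end

section
/- Let Q, R be n×n real symmetric matrices and M = I_m ⊗ Q + (1/m)(𝟙𝟙ᵀ) ⊗ (R − Q). Then rank(M) = rank(R) + (m−1)·rank(Q). -/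
open Matrix
open scoped Kronecker

section AuxRank

variable {K : Type*} [Field K]
variable {m₁ n₁ m₂ n₂ : Type*} [Fintype m₁] [Fintype n₁] [Fintype m₂] [Fintype n₂]

/-- The submodule product is linearly equivalent to the product of submodules. -/
def subProdEquiv {M N : Type*} [AddCommGroup M] [AddCommGroup N] [Module K M] [Module K N]
    (p : Submodule K M) (q : Submodule K N) : (p.prod q) ≃ₗ[K] p × q where
  toFun x := (⟨x.1.1, x.2.1⟩, ⟨x.1.2, x.2.2⟩)
  map_add' := by intros; rfl
  map_smul' := by intros; rfl
  invFun y := ⟨(y.1.1, y.2.1), ⟨y.1.2, y.2.2⟩⟩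
  left_inv := fun x => rfl
  right_inv := fun y => rfl

lemma range_prodMap' {M N M' N' : Type*} [AddCommGroup M] [AddCommGroup N] [AddCommGroup M']
    [AddCommGroup N'] [Module K M] [Module K N] [Module K M'] [Module K N']
    (f : M →ₗ[K] M') (g : N →ₗ[K] N') :
    LinearMap.range (f.prodMap g) = (LinearMap.range f).prod (LinearMap.range g) := by
  ext ⟨x, y⟩
  constructor
  · rintro ⟨⟨a, b⟩, h⟩
    exact ⟨⟨a, congrArg Prod.fst h⟩, ⟨b, congrArg Prod.snd h⟩⟩
  · rintro ⟨⟨a, ha⟩, ⟨b, hb⟩⟩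
    exact ⟨(a, b), Prod.ext ha hb⟩

lemma rank_fromBlocks_diag (A : Matrix m₁ n₁ K) (D : Matrix m₂ n₂ K) :
    (fromBlocks A 0 0 D).rank = A.rank + D.rank := by
  classical
  let e₁ := LinearEquiv.sumArrowLequivProdArrow m₁ m₂ K K
  let e₂ := LinearEquiv.sumArrowLequivProdArrow n₁ n₂ K K
  have key : (fromBlocks A 0 0 D).mulVecLin =
      e₁.symm.toLinearMap ∘ₗ (A.mulVecLin.prodMap D.mulVecLin) ∘ₗ e₂.toLinearMap := by
    apply LinearMap.ext
    intro v
    funext i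
    cases i with
    | inl a =>
      simp [e₁, e₂, fromBlocks_mulVec, LinearEquiv.sumArrowLequivProdArrow,
        Equiv.sumArrowEquivProdArrow, Function.comp]
    | inr b =>
      simp [e₁, e₂, fromBlocks_mulVec, LinearEquiv.sumArrowLequivProdArrow,
        Equiv.sumArrowEquivProdArrow, Function.comp]
  rw [Matrix.rank, key]
  rw [LinearMap.range_comp,
    LinearMap.range_comp_of_range_eq_top _ (LinearMap.range_eq_top.mpr e₂.surjective),
    range_prodMap']
  rw [LinearEquiv.finrank_map_eq]
  rw [(subProdEquiv _ _).finrank_eq, Module.finrank_prod]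
  rfl

end AuxRank

/-- Splitting off the last block. -/
def finStackEquiv (n : Type*) (k : ℕ) : ((n × Fin k) ⊕ n) ≃ (n × Fin (k + 1)) where
  toFun := Sum.elim (fun p => (p.1, p.2.castSucc)) (fun x => (x, Fin.last k))
  invFun p := if h : (p.2 : ℕ) < k then Sum.inl (p.1, ⟨p.2, h⟩) else Sum.inr p.1
  left_inv := by
    rintro (⟨x, i⟩ | x)
    · simp [Fin.castSucc, Fin.castAdd, Fin.castLE, i.isLt]
    · simp [Fin.last]
  right_inv := by
    rintro ⟨x, i⟩
    by_cases h : (i : ℕ) < k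
    · simp [h, Fin.castSucc, Fin.castAdd, Fin.castLE]
    · simp only [h, dif_neg, not_false_iff, Sum.elim_inr]
      have : (i : ℕ) = k := by omega
      simp [Fin.last, Fin.ext_iff, this]

section BlockDiag
variable {K : Type*} [Field K] {n : Type*} [Fintype n] [DecidableEq n]

lemma rank_blockDiagonal_fin : ∀ (k : ℕ) (f : Fin k → Matrix n n K),
    (blockDiagonal f).rank = ∑ i, (f i).rank := by
  intro k
  induction k with
  | zero =>
    intro f
    simp
    have := Matrix.rank_le_card_width (blockDiagonal f)
    simpa using this
  | succ k ih =>
    intro f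
    set e := (finStackEquiv n k).symm with he
    have hre : reindex e e (blockDiagonal f) =
        fromBlocks (blockDiagonal (fun i : Fin k => f i.castSucc)) 0 0 (f (Fin.last k)) := by
      ext i j
      cases i with
      | inl p =>
        cases j with
        | inl q =>
          obtain ⟨x, i⟩ := p; obtain ⟨y, j⟩ := q
          simp [he, finStackEquiv, blockDiagonal_apply, Fin.ext_iff, Fin.castSucc]
        | inr y =>
          obtain ⟨x, i⟩ := p
          simp [he, finStackEquiv, blockDiagonal_apply, Fin.ext_iff]
          omega
      | inr x =>
        cases j with
        | inl q =>
          obtain ⟨y, j⟩ := q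
          simp [he, finStackEquiv, blockDiagonal_apply, Fin.ext_iff]
          omega
        | inr y =>
          simp [he, finStackEquiv, blockDiagonal_apply, Fin.ext_iff, Fin.last]
    have h1 : (blockDiagonal f).rank = (reindex e e (blockDiagonal f)).rank :=
      (Matrix.rank_reindex e e _).symm
    rw [h1, hre, rank_fromBlocks_diag, ih]
    rw [Fin.sum_univ_castSucc]
end BlockDiag

lemma vmv_mul_vmv {m n q : Type*} [Fintype n] {a : m → ℝ} {b : n → ℝ} {c : n → ℝ} {d : q → ℝ} :
    vecMulVec a b * vecMulVec c d = (b ⬝ᵥ c) • vecMulVec a d := by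
  ext i j
  simp only [mul_apply, vecMulVec_apply, Matrix.smul_apply, dotProduct, Finset.sum_mul, smul_eq_mul,
    Finset.mul_sum]
  exact Finset.sum_congr rfl fun k _ => by ring

lemma sub_kronecker' {l m n p : Type*} (A B : Matrix l m ℝ) (C : Matrix n p ℝ) :
    (A - B) ⊗ₖ C = A ⊗ₖ C - B ⊗ₖ C := by
  ext ⟨i, j⟩ ⟨i', j'⟩
  simp [sub_mul]

lemma kronecker_sub' {l m n p : Type*} (A : Matrix l m ℝ) (B C : Matrix n p ℝ) :
    A ⊗ₖ (B - C) = A ⊗ₖ B - A ⊗ₖ C := by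
  ext ⟨i, j⟩ ⟨i', j'⟩
  simp [mul_sub]

theorem stmt_5 (m n : ℕ) (hm : 1 ≤ m)
    (Q R : Matrix (Fin n) (Fin n) ℝ) (hQs : Q.IsSymm) (hRs : R.IsSymm) :
    ((1 : Matrix (Fin m) (Fin m) ℝ) ⊗ₖ Q
      + ((1 / (m : ℝ)) • (Matrix.of fun (_ _ : Fin m) => (1 : ℝ))) ⊗ₖ (R - Q)).rank
      = R.rank + (m - 1) * Q.rank := by
  classical
  obtain _ | k := m
  · exact absurd hm (by omega)
  show ((1 : Matrix (Fin (k+1)) (Fin (k+1)) ℝ) ⊗ₖ Q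
      + ((1 / ((k+1 : ℕ) : ℝ)) • (Matrix.of fun (_ _ : Fin (k+1)) => (1 : ℝ))) ⊗ₖ (R - Q)).rank
      = R.rank + (k + 1 - 1) * Q.rank
  set u : Fin (k+1) → ℝ := fun _ => 1 with hu
  set e0 : Fin (k+1) → ℝ := Pi.single 0 1 with he0
  have d1 : e0 ⬝ᵥ e0 = 1 := by simp [he0, single_dotProduct]
  have d2 : e0 ⬝ᵥ u = 1 := by simp [he0, hu, single_dotProduct]
  have d3 : u ⬝ᵥ e0 = 1 := by simp [he0, hu, dotProduct_single]
  have d4 : u ⬝ᵥ u = ((k+1 : ℕ) : ℝ) := by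
    simp [hu, dotProduct, Finset.sum_const]
  set c : ℝ := 1 / ((k+1 : ℕ) : ℝ) with hc
  have hknz : ((k+1 : ℕ) : ℝ) ≠ 0 := by positivity
  set A := vecMulVec u e0 with hA
  set B := vecMulVec e0 u with hB
  set C := vecMulVec e0 e0 with hC
  set J := vecMulVec u u with hJ
  set S : Matrix (Fin (k+1)) (Fin (k+1)) ℝ := 1 + A - B with hS
  set T : Matrix (Fin (k+1)) (Fin (k+1)) ℝ := 1 - C + (2*c) • B - c • J with hT
  have hAC : A * C = A := by rw [hA, hC, vmv_mul_vmv, d1, one_smul]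
  have hAB : A * B = J := by rw [hA, hB, vmv_mul_vmv, d1, one_smul]
  have hAJ : A * J = J := by rw [hA, hJ, vmv_mul_vmv, d2, one_smul]
  have hBC : B * C = C := by rw [hB, hC, vmv_mul_vmv, d3, one_smul]
  have hBB : B * B = B := by rw [hB, vmv_mul_vmv, d3, one_smul]
  have hBJ : B * J = ((k+1:ℕ):ℝ) • B := by rw [hB, hJ, vmv_mul_vmv, d4]
  have hCA : C * A = C := by rw [hC, hA, vmv_mul_vmv, d2, one_smul]
  have hCB : C * B = B := by rw [hC, hB, vmv_mul_vmv, d1, one_smul]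
  have hBA : B * A = ((k+1:ℕ):ℝ) • C := by rw [hB, hA, vmv_mul_vmv, d4]
  have hJA : J * A = ((k+1:ℕ):ℝ) • A := by rw [hJ, hA, vmv_mul_vmv, d4]
  have hJB : J * B = J := by rw [hJ, hB, vmv_mul_vmv, d3, one_smul]
  have hCC : C * C = C := by rw [hC, vmv_mul_vmv, d1, one_smul]
  have hJC : J * C = A := by rw [hJ, hC, vmv_mul_vmv, d3, one_smul]
  have hCJ : C * J = B := by rw [hC, hJ, vmv_mul_vmv, d2, one_smul]
  have hJJ : J * J = ((k+1:ℕ):ℝ) • J := by rw [hJ, vmv_mul_vmv, d4]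
  have hST : S * T = 1 := by
    rw [hS, hT]
    simp only [mul_add, add_mul, mul_sub, sub_mul, mul_one, one_mul, Matrix.mul_smul,
      Matrix.smul_mul, hAC, hAB, hAJ, hBC, hBB, hBJ, hCA, hCB, hBA, hJA, hJB, hCC, hJC, hCJ, hJJ]
    match_scalars <;> (field_simp [hc]; try ring) <;> (rw [hc]; field_simp; push_cast; ring)
  have hTS : T * S = 1 := by
    rw [hS, hT]
    simp only [mul_add, add_mul, mul_sub, sub_mul, mul_one, one_mul, Matrix.mul_smul,
      Matrix.smul_mul, hAC, hAB, hAJ, hBC, hBB, hBJ, hCA, hCB, hBA, hJA, hJB, hCC, hJC, hCJ, hJJ]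
    match_scalars <;> (field_simp [hc]; try ring) <;> (rw [hc]; field_simp; push_cast; ring)
  have hSCT : S * C * T = c • J := by
    rw [hS, hT]
    simp only [mul_add, add_mul, mul_sub, sub_mul, mul_one, one_mul, Matrix.mul_smul,
      Matrix.smul_mul, hAC, hAB, hAJ, hBC, hBB, hBJ, hCA, hCB, hBA, hJA, hJB, hCC, hJC, hCJ, hJJ]
    match_scalars <;> (field_simp [hc]; try ring)
  have hS1CT : S * (1 - C) * T = 1 - c • J := by
    have h : S * (1 - C) * T = S * T - S * C * T := by
      rw [Matrix.mul_sub S 1 C, Matrix.mul_one, Matrix.sub_mul]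
    rw [h, hST, hSCT]
  -- Kronecker-level conjugation
  set Sk : Matrix (Fin (k+1) × Fin n) (Fin (k+1) × Fin n) ℝ := S ⊗ₖ 1 with hSk
  set Tk : Matrix (Fin (k+1) × Fin n) (Fin (k+1) × Fin n) ℝ := T ⊗ₖ 1 with hTk
  have hSTk : Sk * Tk = 1 := by
    rw [hSk, hTk, ← mul_kronecker_mul, hST, one_mul, one_kronecker_one]
  have hTSk : Tk * Sk = 1 := by
    rw [hSk, hTk, ← mul_kronecker_mul, hTS, one_mul, one_kronecker_one]
  have hSkdet : IsUnit Sk.det := by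
    exact (Matrix.isUnit_iff_isUnit_det Sk).mp ⟨⟨Sk, Tk, hSTk, hTSk⟩, rfl⟩
  have hTkdet : IsUnit Tk.det := by
    exact (Matrix.isUnit_iff_isUnit_det Tk).mp ⟨⟨Tk, Sk, hTSk, hSTk⟩, rfl⟩
  set N : Matrix (Fin (k+1) × Fin n) (Fin (k+1) × Fin n) ℝ :=
    C ⊗ₖ R + (1 - C) ⊗ₖ Q with hN
  have hJof : (Matrix.of fun (_ _ : Fin (k+1)) => (1:ℝ)) = J := by
    ext i j
    simp [hJ, vecMulVec_apply, hu]
  have key : (1 : Matrix (Fin (k+1)) (Fin (k+1)) ℝ) ⊗ₖ Q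
      + (c • (Matrix.of fun (_ _ : Fin (k+1)) => (1 : ℝ))) ⊗ₖ (R - Q) = Sk * N * Tk := by
    rw [hJof]
    have expand : Sk * N * Tk = (S * C * T) ⊗ₖ R + (S * (1 - C) * T) ⊗ₖ Q := by
      rw [hN, hSk, hTk, Matrix.mul_add, Matrix.add_mul, ← mul_kronecker_mul, ← mul_kronecker_mul,
        ← mul_kronecker_mul, ← mul_kronecker_mul, one_mul, one_mul, mul_one, mul_one]
    rw [expand, hSCT, hS1CT]
    rw [kronecker_sub', sub_kronecker']
    abel
  rw [key]
  rw [Matrix.rank_mul_eq_left_of_isUnit_det Tk (Sk * N) hTkdet]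
  rw [Matrix.rank_mul_eq_right_of_isUnit_det Sk N hSkdet]
  have hNb : N = reindex (Equiv.prodComm (Fin n) (Fin (k+1))) (Equiv.prodComm (Fin n) (Fin (k+1)))
      (blockDiagonal (fun i : Fin (k+1) => if i = 0 then R else Q)) := by
    ext ⟨i, j⟩ ⟨i', j'⟩
    simp only [hN, reindex_apply, submatrix_apply, Equiv.prodComm_symm, Equiv.prodComm_apply,
      Prod.swap_prod_mk, blockDiagonal_apply, Matrix.add_apply, kroneckerMap_apply, Matrix.sub_apply,
      one_apply, hC, vecMulVec_apply, he0, Pi.single_apply, Prod.mk.injEq]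
    by_cases hii : i = i'
    · subst hii
      by_cases hi0 : i = 0 <;> simp [hi0]
    · rcases eq_or_ne i 0 with rfl | h0
      · rcases eq_or_ne i' 0 with rfl | h0'
        · exact absurd rfl hii
        · simp [hii, h0']
      · simp [hii, h0]
  rw [hNb, Matrix.rank_reindex, rank_blockDiagonal_fin]
  rw [Fin.sum_univ_succ]
  simp [Fin.succ_ne_zero]
end

section
/- Let A, B be n×n symmetric matrices with B having zero diagonal, and suppose the monic x-symmetric biquadratic form P(x,y) = (xᵀx)(yᵀy) + ((𝟙ᵀx)² − xᵀx)(yᵀAy) + (xᵀx)(yᵀBy) is nonnegative for all x ∈ ℝ^m, y ∈ ℝ^n. Then P can be written as a sum of at most rank(I + B + (m−1)A) + (m−1)·rank(I + B − A) squares of bilinear forms xᵀWy. -/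
open Matrix

lemma quad_spectral {n : ℕ} {S : Matrix (Fin n) (Fin n) ℝ} (hS : S.IsHermitian) (y : Fin n → ℝ) :
    y ⬝ᵥ S *ᵥ y = ∑ i, hS.eigenvalues i * ((⇑(hS.eigenvectorBasis i) : Fin n → ℝ) ⬝ᵥ y) ^ 2 := by
  conv_lhs => rw [hS.spectral_theorem, Unitary.conjStarAlgAut_apply]
  rw [← mulVec_mulVec, ← mulVec_mulVec, dotProduct_mulVec]
  rw [show ∀ z : Fin n → ℝ, (y ᵥ* ↑hS.eigenvectorUnitary) ⬝ᵥ z = ∑ i, (y ᵥ* ↑hS.eigenvectorUnitary) i * z i from fun z => rfl]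
  refine Finset.sum_congr rfl fun i _ => ?_
  have h1 : (y ᵥ* (hS.eigenvectorUnitary : Matrix (Fin n) (Fin n) ℝ)) i
      = (⇑(hS.eigenvectorBasis i) : Fin n → ℝ) ⬝ᵥ y := by
    simp [vecMul, dotProduct, mul_comm]
  have h2 : ((diagonal (RCLike.ofReal ∘ hS.eigenvalues) *ᵥ
        (star (hS.eigenvectorUnitary : Matrix (Fin n) (Fin n) ℝ) *ᵥ y)) i)
      = hS.eigenvalues i * ((⇑(hS.eigenvectorBasis i) : Fin n → ℝ) ⬝ᵥ y) := by
    rw [mulVec_diagonal]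
    simp [mulVec, dotProduct, conjTranspose_apply, Matrix.star_apply]
  rw [h1, h2]; ring

lemma psd_decomp {n : ℕ} {S : Matrix (Fin n) (Fin n) ℝ} (hS : S.PosSemidef) :
    ∃ v : Fin S.rank → (Fin n → ℝ), ∀ y, y ⬝ᵥ S *ᵥ y = ∑ k, (v k ⬝ᵥ y) ^ 2 := by
  have h1 := hS.1
  have hcard : Fintype.card {i // h1.eigenvalues i ≠ 0} = S.rank :=
    h1.rank_eq_card_non_zero_eigs.symm
  let e : Fin S.rank ≃ {i // h1.eigenvalues i ≠ 0} := (Fintype.equivFinOfCardEq hcard).symm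
  refine ⟨fun k => Real.sqrt (h1.eigenvalues (e k).1) • (⇑(h1.eigenvectorBasis (e k).1) : Fin n → ℝ),
    fun y => ?_⟩
  rw [quad_spectral h1 y]
  have key : (∑ i : Fin n, h1.eigenvalues i * ((⇑(h1.eigenvectorBasis i) : Fin n → ℝ) ⬝ᵥ y) ^ 2)
      = ∑ i : {i // h1.eigenvalues i ≠ 0},
          h1.eigenvalues i.1 * ((⇑(h1.eigenvectorBasis i.1) : Fin n → ℝ) ⬝ᵥ y) ^ 2 := by
    rw [← Finset.sum_filter_of_ne (p := fun i => h1.eigenvalues i ≠ 0)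
        (by intro i _ h hne; rw [hne] at h; simp at h)]
    rw [← Finset.sum_subtype (Finset.univ.filter (fun i => h1.eigenvalues i ≠ 0))
        (by simp) (fun i => h1.eigenvalues i * ((⇑(h1.eigenvectorBasis i) : Fin n → ℝ) ⬝ᵥ y) ^ 2)]
  rw [key, ← Equiv.sum_comp e (fun i : {i // h1.eigenvalues i ≠ 0} =>
      h1.eigenvalues i.1 * ((⇑(h1.eigenvectorBasis i.1) : Fin n → ℝ) ⬝ᵥ y) ^ 2)]
  refine Finset.sum_congr rfl fun k _ => ?_
  rw [smul_dotProduct, smul_eq_mul, mul_pow, Real.sq_sqrt (hS.eigenvalues_nonneg (e k).1)]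

lemma real_posSemidef_of {n : ℕ} {M : Matrix (Fin n) (Fin n) ℝ} (hsym : M.IsSymm)
    (h : ∀ y : Fin n → ℝ, 0 ≤ y ⬝ᵥ M *ᵥ y) : M.PosSemidef := by
  rw [posSemidef_iff_dotProduct_mulVec]
  constructor
  · ext i j
    simp only [conjTranspose_apply, star_trivial]
    exact congrFun (congrFun hsym i) j
  · intro y
    simpa using h y

lemma dot_vecMulVec {m n : ℕ} (x w : Fin m → ℝ) (v y : Fin n → ℝ) :
    x ⬝ᵥ (vecMulVec w v) *ᵥ y = (w ⬝ᵥ x) * (v ⬝ᵥ y) := by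
  simp only [vecMulVec, mulVec, dotProduct, Matrix.of_apply, Finset.mul_sum, Finset.sum_mul]
  rw [Finset.sum_comm]
  exact Finset.sum_congr rfl fun i _ => Finset.sum_congr rfl fun j _ => by ring

lemma ones_basis (m : ℕ) (hm : 1 ≤ m) :
    ∃ b : OrthonormalBasis (Fin m) ℝ (EuclideanSpace ℝ (Fin m)),
      (⇑(b ⟨0, hm⟩) : Fin m → ℝ) = fun _ => (Real.sqrt m)⁻¹ := by
  have hm0 : (0:ℝ) < m := by exact_mod_cast hm
  set u : EuclideanSpace ℝ (Fin m) :=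
    (WithLp.equiv 2 (Fin m → ℝ)).symm (fun _ => (Real.sqrt m)⁻¹) with hu
  have hcard : Module.finrank ℝ (EuclideanSpace ℝ (Fin m)) = Fintype.card (Fin m) := by
    simp
  have horth : Orthonormal ℝ (({(⟨0, hm⟩ : Fin m)} : Set (Fin m)).restrict (fun _ => u)) := by
    rw [orthonormal_iff_ite]
    rintro ⟨i, hi⟩ ⟨j, hj⟩
    simp only [Set.mem_singleton_iff] at hi hj
    subst hi; subst hj
    simp only [if_pos rfl, Set.restrict_apply]
    rw [PiLp.inner_apply]
    simp only [RCLike.inner_apply, conj_trivial]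
    have huk : ∀ k : Fin m, ((u k) * (u k) : ℝ) = (m:ℝ)⁻¹ := by
      intro k
      rw [hu]
      simp only [WithLp.equiv_symm_apply, PiLp.toLp_apply]
      rw [← mul_inv, Real.mul_self_sqrt hm0.le]
    change ∑ k, u.ofLp k * u.ofLp k = _
    simp only [RCLike.star_def, conj_trivial, huk, Finset.sum_const, Finset.card_univ,
      Fintype.card_fin, nsmul_eq_mul, if_true]
    field_simp
  obtain ⟨b, hb⟩ := horth.exists_orthonormalBasis_extension_of_card_eq hcard
  refine ⟨b, ?_⟩
  rw [hb ⟨0, hm⟩ rfl, hu]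
  rfl

lemma parseval {m : ℕ} (b : OrthonormalBasis (Fin m) ℝ (EuclideanSpace ℝ (Fin m)))
    (x : Fin m → ℝ) :
    x ⬝ᵥ x = ∑ i, ((⇑(b i) : Fin m → ℝ) ⬝ᵥ x) ^ 2 := by
  set x' : EuclideanSpace ℝ (Fin m) := (WithLp.equiv 2 (Fin m → ℝ)).symm x with hx'
  have h := b.sum_inner_mul_inner x' x'
  have h1 : ∀ i, (inner ℝ (x') (b i) : ℝ) = (⇑(b i) : Fin m → ℝ) ⬝ᵥ x := by
    intro i
    rw [real_inner_comm, PiLp.inner_apply]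
    simp [dotProduct, hx', WithLp.equiv_symm_apply, mul_comm]
  have h2 : (inner ℝ x' x' : ℝ) = x ⬝ᵥ x := by
    rw [PiLp.inner_apply]
    simp [dotProduct, hx', WithLp.equiv_symm_apply, pow_two]
  have h3 : ∀ i, (inner ℝ (b i) x' : ℝ) = (⇑(b i) : Fin m → ℝ) ⬝ᵥ x := by
    intro i; rw [← real_inner_comm]; exact h1 i
  rw [← h2, ← h]
  exact Finset.sum_congr rfl fun i _ => by rw [h1 i, h3 i, pow_two]

theorem stmt_6 (m n : ℕ) (hm : 1 ≤ m) (hn : 1 ≤ n)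
    (A B : Matrix (Fin n) (Fin n) ℝ) (hA : A.IsSymm) (hB : B.IsSymm)
    (hBdiag : ∀ j, B j j = 0)
    (hpsd : ∀ (x : Fin m → ℝ) (y : Fin n → ℝ),
        0 ≤ (x ⬝ᵥ x) * (y ⬝ᵥ y)
            + ((∑ i, x i) ^ 2 - x ⬝ᵥ x) * (y ⬝ᵥ A.mulVec y)
            + (x ⬝ᵥ x) * (y ⬝ᵥ B.mulVec y)) :
    ∃ (r : ℕ) (W : Fin r → Matrix (Fin m) (Fin n) ℝ),
      r ≤ ((1 : Matrix (Fin n) (Fin n) ℝ) + B + ((m : ℝ) - 1) • A).rank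
            + (m - 1) * ((1 : Matrix (Fin n) (Fin n) ℝ) + B - A).rank ∧
      ∀ (x : Fin m → ℝ) (y : Fin n → ℝ),
        (x ⬝ᵥ x) * (y ⬝ᵥ y)
            + ((∑ i, x i) ^ 2 - x ⬝ᵥ x) * (y ⬝ᵥ A.mulVec y)
            + (x ⬝ᵥ x) * (y ⬝ᵥ B.mulVec y)
          = ∑ p, (x ⬝ᵥ (W p).mulVec y) ^ 2 := by
  have hm0 : (0:ℝ) < m := by exact_mod_cast hm
  set S : Matrix (Fin n) (Fin n) ℝ := 1 + B + ((m : ℝ) - 1) • A with hSdef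
  set T : Matrix (Fin n) (Fin n) ℝ := (1 : Matrix (Fin n) (Fin n) ℝ) + B - A with hTdef
  have hSq : ∀ y : Fin n → ℝ, y ⬝ᵥ S *ᵥ y
      = y ⬝ᵥ y + y ⬝ᵥ B *ᵥ y + ((m:ℝ)-1) * (y ⬝ᵥ A *ᵥ y) := by
    intro y
    rw [hSdef, add_mulVec, add_mulVec, one_mulVec, smul_mulVec,
      dotProduct_add, dotProduct_add, dotProduct_smul]
    simp only [smul_eq_mul]
  have hTq : ∀ y : Fin n → ℝ, y ⬝ᵥ T *ᵥ y
      = y ⬝ᵥ y + y ⬝ᵥ B *ᵥ y - y ⬝ᵥ A *ᵥ y := by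
    intro y
    rw [hTdef, sub_mulVec, add_mulVec, one_mulVec, dotProduct_sub, dotProduct_add]
  have hSpsd : S.PosSemidef := by
    apply real_posSemidef_of
    · show Sᵀ = S
      rw [hSdef, transpose_add, transpose_add, transpose_one, transpose_smul, hA, hB]
    · intro y
      have h := hpsd (fun _ : Fin m => (1:ℝ)) y
      have hd : (fun _ : Fin m => (1:ℝ)) ⬝ᵥ (fun _ : Fin m => (1:ℝ)) = (m:ℝ) := by
        simp [dotProduct]
      have hs : (∑ _i : Fin m, (1:ℝ)) = (m:ℝ) := by simp
      rw [hd, hs] at h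
      rw [hSq y]
      nlinarith [h, hm0]
  have hTpsd : 1 < m → T.PosSemidef := by
    intro h2
    apply real_posSemidef_of
    · show Tᵀ = T
      rw [hTdef, transpose_sub, transpose_add, transpose_one, hA, hB]
    · intro y
      have h1m : (1:ℕ) < m := h2
      set a : Fin m := ⟨0, hm⟩ with ha
      set bb : Fin m := ⟨1, h1m⟩ with hbb
      have hab : a ≠ bb := by simp [ha, hbb, Fin.ext_iff]
      set x : Fin m → ℝ := fun i => (if i = a then (1:ℝ) else 0) - (if i = bb then 1 else 0)
        with hx
      have h := hpsd x y
      have hs : (∑ i, x i) = 0 := by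
        rw [hx]
        rw [Finset.sum_sub_distrib]
        simp [Finset.sum_ite_eq']
      have hd : x ⬝ᵥ x = 2 := by
        have hxx : ∀ i, x i * x i = (if i = a then (1:ℝ) else 0) + (if i = bb then 1 else 0) := by
          intro i
          by_cases hia : i = a
          · by_cases hib : i = bb
            · exact absurd (hia.symm.trans hib) hab
            · simp [hx, hia, hib, hab]
          · by_cases hib : i = bb
            · simp [hx, hia, hib, Ne.symm hab]
            · simp [hx, hia, hib]
        rw [show x ⬝ᵥ x = ∑ i, x i * x i from rfl]
        simp only [hxx]
        rw [Finset.sum_add_distrib]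
        simp only [Finset.sum_ite_eq', Finset.mem_univ, if_pos]
        norm_num
      rw [hd, hs] at h
      rw [hTq y]
      nlinarith [h]
  obtain ⟨vS, hvS⟩ := psd_decomp hSpsd
  have hvTex : ∃ vT : Fin T.rank → (Fin n → ℝ),
      1 < m → ∀ y, y ⬝ᵥ T *ᵥ y = ∑ k, (vT k ⬝ᵥ y) ^ 2 := by
    by_cases h2 : 1 < m
    · obtain ⟨vT, hvT⟩ := psd_decomp (hTpsd h2)
      exact ⟨vT, fun _ => hvT⟩
    · exact ⟨fun _ _ => 0, fun h => absurd h h2⟩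
  obtain ⟨vT, hvT⟩ := hvTex
  obtain ⟨b, hb⟩ := ones_basis m hm
  set i0 : Fin m := ⟨0, hm⟩ with hi0
  have hcardsub : Fintype.card {i : Fin m // i ≠ i0} = m - 1 := by
    simp [Fintype.card_subtype_compl]
  have hcard : Fintype.card (Fin S.rank ⊕ ({i : Fin m // i ≠ i0} × Fin T.rank))
      = S.rank + (m - 1) * T.rank := by
    rw [Fintype.card_sum, Fintype.card_prod, hcardsub]
    simp
  let eqv : Fin (S.rank + (m - 1) * T.rank) ≃ (Fin S.rank ⊕ ({i : Fin m // i ≠ i0} × Fin T.rank)) :=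
    (Fintype.equivFinOfCardEq hcard).symm
  set W' : (Fin S.rank ⊕ ({i : Fin m // i ≠ i0} × Fin T.rank)) → Matrix (Fin m) (Fin n) ℝ :=
    fun q => Sum.rec (fun k => vecMulVec (⇑(b i0) : Fin m → ℝ) (vS k))
      (fun p => vecMulVec (⇑(b p.1.1) : Fin m → ℝ) (vT p.2)) q with hW'
  refine ⟨S.rank + (m - 1) * T.rank, fun p => W' (eqv p), le_refl _, fun x y => ?_⟩
  set cx : Fin m → ℝ := fun i => (⇑(b i) : Fin m → ℝ) ⬝ᵥ x with hcx
  have e1 : x ⬝ᵥ x = ∑ i, cx i ^ 2 := parseval b x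
  have e2 : (∑ i, x i) ^ 2 = (m:ℝ) * cx i0 ^ 2 := by
    have hc0 : cx i0 = (Real.sqrt m)⁻¹ * ∑ i, x i := by
      rw [hcx]
      simp only [hi0]
      rw [hb]
      simp [dotProduct, Finset.mul_sum]
    rw [hc0, mul_pow, ← mul_assoc]
    rw [show ((m:ℝ) * ((Real.sqrt m)⁻¹)^2) = 1 by
      rw [inv_pow, Real.sq_sqrt hm0.le]
      field_simp]
    ring
  have e3 : ∑ i, cx i ^ 2 = cx i0 ^ 2 + ∑ i : {i : Fin m // i ≠ i0}, cx i.1 ^ 2 := by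
    rw [← Finset.sum_filter_add_sum_filter_not Finset.univ (fun i => i = i0) (fun i => cx i ^ 2)]
    congr 1
    · rw [Finset.filter_eq']
      simp
    · exact Finset.sum_subtype (p := fun i => i ≠ i0)
        (Finset.univ.filter (fun i => ¬ i = i0)) (fun i => by simp) (fun i => cx i ^ 2)
  have main : (x ⬝ᵥ x) * (y ⬝ᵥ y)
      + ((∑ i, x i) ^ 2 - x ⬝ᵥ x) * (y ⬝ᵥ A.mulVec y)
      + (x ⬝ᵥ x) * (y ⬝ᵥ B.mulVec y)
      = cx i0 ^ 2 * (y ⬝ᵥ S *ᵥ y) + (∑ i : {i : Fin m // i ≠ i0}, cx i.1 ^ 2) * (y ⬝ᵥ T *ᵥ y) := by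
    rw [e1, e2, e3, hSq y, hTq y]
    ring
  have hTfac : (∑ i : {i : Fin m // i ≠ i0}, cx i.1 ^ 2) * (y ⬝ᵥ T *ᵥ y)
      = ∑ i : {i : Fin m // i ≠ i0}, cx i.1 ^ 2 * ∑ k, (vT k ⬝ᵥ y) ^ 2 := by
    by_cases h2 : 1 < m
    · rw [hvT h2 y, Finset.sum_mul]
    · have hm1 : m = 1 := le_antisymm (not_lt.1 h2) hm
      have hempty : IsEmpty {i : Fin m // i ≠ i0} := by
        subst hm1
        exact ⟨fun i => i.2 (Subsingleton.elim _ _)⟩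
      rw [Finset.univ_eq_empty, Finset.sum_empty, Finset.sum_empty, zero_mul]
  rw [main, hvS y, hTfac]
  have step1 : ∀ k, (x ⬝ᵥ (W' (Sum.inl k)) *ᵥ y) ^ 2 = (cx i0 * (vS k ⬝ᵥ y)) ^ 2 := fun k => by
    show (x ⬝ᵥ (vecMulVec (⇑(b i0) : Fin m → ℝ) (vS k)) *ᵥ y) ^ 2 = _
    rw [dot_vecMulVec]
  have step2 : ∀ (i : {i : Fin m // i ≠ i0}) (k : Fin T.rank),
      (x ⬝ᵥ (W' (Sum.inr (i, k))) *ᵥ y) ^ 2 = (cx i.1 * (vT k ⬝ᵥ y)) ^ 2 := fun i k => by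
    show (x ⬝ᵥ (vecMulVec (⇑(b i.1) : Fin m → ℝ) (vT k)) *ᵥ y) ^ 2 = _
    rw [dot_vecMulVec]
  calc cx i0 ^ 2 * ∑ k, (vS k ⬝ᵥ y) ^ 2
        + ∑ i : {i : Fin m // i ≠ i0}, cx i.1 ^ 2 * ∑ k, (vT k ⬝ᵥ y) ^ 2
      = ∑ q : (Fin S.rank ⊕ ({i : Fin m // i ≠ i0} × Fin T.rank)), (x ⬝ᵥ (W' q) *ᵥ y) ^ 2 := by
        rw [Fintype.sum_sum_type]
        congr 1
        · rw [Finset.mul_sum]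
          refine Finset.sum_congr rfl fun k _ => ?_
          rw [step1 k]; ring
        · rw [Fintype.sum_prod_type]
          refine Finset.sum_congr rfl fun i _ => ?_
          rw [Finset.mul_sum]
          refine Finset.sum_congr rfl fun k _ => ?_
          rw [step2 i k]; ring
    _ = ∑ p : Fin (S.rank + (m - 1) * T.rank), (x ⬝ᵥ (W' (eqv p)) *ᵥ y) ^ 2 :=
        (Equiv.sum_comp eqv (fun q => (x ⬝ᵥ (W' q) *ᵥ y) ^ 2)).symm
end

section
/- Let P(x,y) be a biquadratic form in x ∈ ℝ^m, y ∈ ℝ^n that is x-symmetric (invariant under any permutation of x₁,…,x_m) and nonnegative for all x, y. Then P is a sum of squares of bilinear forms. -/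
open Matrix

lemma quad_sos {N : ℕ} (b : Fin N → Fin N → ℝ)
    (h : ∀ y : Fin N → ℝ, 0 ≤ ∑ j, ∑ l, b j l * y j * y l) :
    ∃ v : Fin N → Fin N → ℝ,
      ∀ y, ∑ j, ∑ l, b j l * y j * y l = ∑ q, (v q ⬝ᵥ y) ^ 2 := by
  set M : Matrix (Fin N) (Fin N) ℝ := Matrix.of (fun j l => (b j l + b l j) / 2) with hM
  have key : ∀ y : Fin N → ℝ, y ⬝ᵥ M.mulVec y = ∑ j, ∑ l, b j l * y j * y l := by
    intro y
    have : y ⬝ᵥ M.mulVec y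
        = ∑ j, ∑ l, (b j l * y j * y l + b l j * y j * y l) / 2 := by
      simp only [dotProduct, mulVec, hM, Matrix.of_apply, Finset.mul_sum]
      exact Finset.sum_congr rfl fun j _ => Finset.sum_congr rfl fun l _ => by ring
    rw [this]
    have h2 : ∑ j, ∑ l, b l j * y j * y l = ∑ j, ∑ l, b j l * y j * y l := by
      rw [Finset.sum_comm]
      exact Finset.sum_congr rfl fun j _ => Finset.sum_congr rfl fun l _ => by ring
    calc ∑ j, ∑ l, (b j l * y j * y l + b l j * y j * y l) / 2
        = ((∑ j, ∑ l, b j l * y j * y l) + ∑ j, ∑ l, b l j * y j * y l) / 2 := by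
          simp only [← Finset.sum_div, ← Finset.sum_add_distrib]
      _ = ∑ j, ∑ l, b j l * y j * y l := by rw [h2]; ring
  have hpsd : M.PosSemidef := by
    refine Matrix.PosSemidef.of_dotProduct_mulVec_nonneg ?_ ?_
    · ext j l
      simp only [Matrix.conjTranspose_apply, hM, Matrix.of_apply, star_trivial]
      ring
    · intro y
      rw [show (star y) = y from rfl, key]
      exact h y
  obtain ⟨B, hB⟩ : ∃ B : Matrix (Fin N) (Fin N) ℝ, M = Bᴴ * B := by
    open scoped MatrixOrder in
    exact CStarAlgebra.nonneg_iff_eq_star_mul_self.mp hpsd.nonneg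
  refine ⟨fun q => B q, fun y => ?_⟩
  rw [← key, hB]
  have : y ⬝ᵥ (Bᴴ * B).mulVec y = (B.mulVec y) ⬝ᵥ (B.mulVec y) := by
    rw [← Matrix.mulVec_mulVec, Matrix.dotProduct_mulVec]
    congr 1
    ext q
    simp only [Matrix.vecMul, dotProduct, Matrix.conjTranspose_apply, star_trivial,
      Matrix.mulVec]
    exact Finset.sum_congr rfl fun j _ => by ring
  rw [this]
  simp only [dotProduct, Matrix.mulVec]
  exact Finset.sum_congr rfl fun q _ => by rw [sq]

lemma assemble {m n : ℕ}
    (P : (Fin m → ℝ) → (Fin n → ℝ) → ℝ)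
    (α β : Fin m → Fin m → ℝ) (b c : Fin n → Fin n → ℝ)
    (hα : ∀ x : Fin m → ℝ, 0 ≤ ∑ i, ∑ k, α i k * x i * x k)
    (hβ : ∀ x : Fin m → ℝ, 0 ≤ ∑ i, ∑ k, β i k * x i * x k)
    (hb : ∀ y : Fin n → ℝ, 0 ≤ ∑ j, ∑ l, b j l * y j * y l)
    (hc : ∀ y : Fin n → ℝ, 0 ≤ ∑ j, ∑ l, c j l * y j * y l)
    (hdec : ∀ x y, P x y =
      (∑ i, ∑ k, α i k * x i * x k) * (∑ j, ∑ l, b j l * y j * y l)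
      + (∑ i, ∑ k, β i k * x i * x k) * (∑ j, ∑ l, c j l * y j * y l)) :
    ∃ (r : ℕ) (W : Fin r → Matrix (Fin m) (Fin n) ℝ),
      ∀ x y, P x y = ∑ p, (x ⬝ᵥ (W p).mulVec y) ^ 2 := by
  obtain ⟨u, hu⟩ := quad_sos α hα
  obtain ⟨u', hu'⟩ := quad_sos β hβ
  obtain ⟨v, hv⟩ := quad_sos b hb
  obtain ⟨w, hw⟩ := quad_sos c hc
  have houter : ∀ (f : Fin m → ℝ) (g : Fin n → ℝ) (x : Fin m → ℝ) (y : Fin n → ℝ),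
      x ⬝ᵥ (Matrix.of fun i j => f i * g j).mulVec y = (f ⬝ᵥ x) * (g ⬝ᵥ y) := by
    intro f g x y
    simp only [dotProduct, mulVec, Matrix.of_apply, Finset.mul_sum, Finset.sum_mul]
    rw [Finset.sum_comm]
    exact Finset.sum_congr rfl fun i _ => Finset.sum_congr rfl fun j _ => by ring
  set W0 : (Fin m × Fin n) ⊕ (Fin m × Fin n) → Matrix (Fin m) (Fin n) ℝ :=
    Sum.elim (fun pq => Matrix.of fun i j => u pq.1 i * v pq.2 j)
             (fun pq => Matrix.of fun i j => u' pq.1 i * w pq.2 j) with hW0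
  have hmain : ∀ x y, P x y = ∑ t : (Fin m × Fin n) ⊕ (Fin m × Fin n), (x ⬝ᵥ (W0 t).mulVec y) ^ 2 := by
    intro x y
    rw [hdec, hu, hu', hv, hw]
    rw [Fintype.sum_sum_type]
    simp only [hW0, Sum.elim_inl, Sum.elim_inr, Fintype.sum_prod_type, houter, mul_pow]
    rw [← Finset.sum_mul_sum, ← Finset.sum_mul_sum]
  refine ⟨Fintype.card ((Fin m × Fin n) ⊕ (Fin m × Fin n)),
    fun p => W0 ((Fintype.equivFin _).symm p), fun x y => ?_⟩
  rw [hmain x y, ← Equiv.sum_comp (Fintype.equivFin ((Fin m × Fin n) ⊕ (Fin m × Fin n))).symm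
    (fun t => (x ⬝ᵥ (W0 t).mulVec y) ^ 2)]

theorem stmt_7 (m n : ℕ)
    (a : Fin m → Fin n → Fin m → Fin n → ℝ)
    (P : (Fin m → ℝ) → (Fin n → ℝ) → ℝ)
    (hP : ∀ x y, P x y = ∑ i, ∑ j, ∑ k, ∑ l, a i j k l * x i * y j * x k * y l)
    (hsym : ∀ (σ : Equiv.Perm (Fin m)) (x : Fin m → ℝ) (y : Fin n → ℝ),
        P (fun i => x (σ i)) y = P x y)
    (hpsd : ∀ x y, 0 ≤ P x y) :
    ∃ (r : ℕ) (W : Fin r → Matrix (Fin m) (Fin n) ℝ),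
      ∀ x y, P x y = ∑ p, (x ⬝ᵥ (W p).mulVec y) ^ 2 := by
  rcases Nat.lt_or_ge m 2 with hm | hm2
  · interval_cases m
    · -- m = 0
      refine assemble P (fun _ _ => 0) (fun _ _ => 0) (fun _ _ => 0) (fun _ _ => 0)
        (fun x => by simp) (fun x => by simp) (fun y => by simp) (fun y => by simp)
        (fun x y => by rw [hP]; simp)
    · -- m = 1
      have hc1 : ∀ y : Fin n → ℝ, P (fun _ => 1) y = ∑ j, ∑ l, a 0 j 0 l * y j * y l := by
        intro y
        rw [hP]
        simp only [Fin.sum_univ_one]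
        exact Finset.sum_congr rfl fun j _ => Finset.sum_congr rfl fun l _ => by ring
      refine assemble P (fun _ _ => 0) (fun _ _ => 1) (fun _ _ => 0) (fun j l => a 0 j 0 l)
        (fun x => by simp) (fun x => ?_) (fun y => by simp) (fun y => ?_) (fun x y => ?_)
      · simp only [Fin.sum_univ_one, one_mul]
        exact mul_self_nonneg (x 0)
      · show 0 ≤ ∑ j, ∑ l, a 0 j 0 l * y j * y l
        rw [← hc1]; exact hpsd _ y
      · rw [hP]
        simp only [Fin.sum_univ_one, one_mul, zero_mul, Finset.sum_const_zero,
          mul_zero, zero_add, Finset.mul_sum]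
        exact Finset.sum_congr rfl fun j _ => Finset.sum_congr rfl fun l _ => by ring
  · -- m ≥ 2
    haveI : NeZero m := ⟨by omega⟩
    have h01 : (0 : Fin m) ≠ 1 := by
      intro h
      have h' := congrArg Fin.val h
      rw [Fin.val_zero, Fin.val_one', Nat.mod_eq_of_lt (by omega)] at h'
      omega
    -- the coefficient functions
    set C : Fin m → Fin m → (Fin n → ℝ) → ℝ :=
      fun i k y => ∑ j, ∑ l, a i j k l * y j * y l with hC
    -- master expansion
    have hPc : ∀ x y, P x y = ∑ i, ∑ k, x i * x k * C i k y := by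
      intro x y
      rw [hP]
      refine Finset.sum_congr rfl fun i _ => ?_
      rw [Finset.sum_comm]
      refine Finset.sum_congr rfl fun k _ => ?_
      simp only [hC, Finset.mul_sum]
      exact Finset.sum_congr rfl fun j _ => Finset.sum_congr rfl fun l _ => by ring
    set e : Fin m → (Fin m → ℝ) := fun i => Pi.single i 1 with he
    -- evaluation at p • e i + q • e k for i ≠ k
    have heval2 : ∀ (p q : ℝ) (i k : Fin m) (y : Fin n → ℝ),
        P (p • e i + q • e k) y
          = p*p*C i i y + p*q*C i k y + q*p*C k i y + q*q*C k k y := by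
      intro p q i k y
      rw [hPc]
      have hterm : ∀ t s : Fin m, (p • e i + q • e k) t * (p • e i + q • e k) s * C t s y
          = (p * (e i t) + q * (e k t)) * (p * (e i s) + q * (e k s)) * C t s y := by
        intro t s; simp [e]
      calc (∑ t, ∑ s, (p • e i + q • e k) t * (p • e i + q • e k) s * C t s y)
          = ∑ t, ∑ s, ((p * (e i t)) * (p * (e i s)) * C t s y
              + (p * (e i t)) * (q * (e k s)) * C t s y
              + (q * (e k t)) * (p * (e i s)) * C t s y
              + (q * (e k t)) * (q * (e k s)) * C t s y) := by
            refine Finset.sum_congr rfl fun t _ => Finset.sum_congr rfl fun s _ => ?_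
            rw [hterm]; ring
        _ = p*p*C i i y + p*q*C i k y + q*p*C k i y + q*q*C k k y := by
            simp only [Finset.sum_add_distrib, he, Pi.single_apply, mul_ite, ite_mul,
              mul_one, mul_zero, zero_mul, one_mul, Finset.sum_ite_eq', Finset.mem_univ,
              if_true]
    -- P at a single basis vector
    have hCE : ∀ (i : Fin m) (y : Fin n → ℝ), P (e i) y = C i i y := by
      intro i y
      have h := heval2 1 0 i i y
      simpa using h
    have hperm_single : ∀ (i : Fin m) (y : Fin n → ℝ), P (e i) y = P (e 0) y := by
      intro i y
      have hfun : (fun t => e 0 (Equiv.swap 0 i t)) = e i := by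
        funext t
        simp [he, Pi.single_apply, Equiv.swap_apply_eq_iff, Equiv.swap_apply_left]
      calc P (e i) y = P (fun t => e 0 (Equiv.swap 0 i t)) y := by rw [hfun]
        _ = P (e 0) y := hsym _ _ y
    have hE : ∀ (i : Fin m) (y : Fin n → ℝ), C i i y = C 0 0 y := by
      intro i y
      rw [← hCE, ← hCE, hperm_single]
    have hCpair : ∀ (i k : Fin m) (y : Fin n → ℝ),
        P (e i + e k) y = C i i y + C i k y + C k i y + C k k y := by
      intro i k y
      have h := heval2 1 1 i k y
      simpa using h
    have hpairP : ∀ (i k : Fin m), i ≠ k → ∀ y, P (e i + e k) y = P (e 0 + e 1) y := by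
      intro i k hik y
      set s1 := Equiv.swap (0 : Fin m) i with hs1
      have hk'0 : s1 k ≠ 0 := by
        intro h
        apply hik
        have : k = s1 0 := by rw [← h]; simp [hs1]
        simpa [hs1, Equiv.swap_apply_left] using this.symm
      set τ := (Equiv.swap (1 : Fin m) (s1 k)).trans s1 with hτ
      have hτ0 : τ 0 = i := by
        rw [hτ, Equiv.trans_apply, Equiv.swap_apply_of_ne_of_ne h01 (Ne.symm hk'0), hs1,
          Equiv.swap_apply_left]
      have hτ1 : τ 1 = k := by
        simp [hτ, Equiv.swap_apply_left, hs1]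
      have hfun : (fun t => (e 0 + e 1) (τ.symm t)) = e i + e k := by
        funext t
        simp [he, Pi.single_apply, Equiv.symm_apply_eq, hτ0, hτ1]
      calc P (e i + e k) y = P (fun t => (e 0 + e 1) (τ.symm t)) y := by rw [hfun]
        _ = P (e 0 + e 1) y := hsym _ _ y
    have hDq : ∀ (i k : Fin m), i ≠ k → ∀ y,
        C i k y + C k i y = C 0 1 y + C 1 0 y := by
      intro i k hik y
      have h1 := hCpair i k y
      have h2 := hCpair 0 1 y
      have h3 := hpairP i k hik y
      have e1 := hE i y
      have e2 := hE k y
      have e3 := hE 1 y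
      linarith
    -- the splitting of the double sum
    have hsub : ∀ (g : Fin m → Fin m → ℝ),
        (∑ i, ∑ k ∈ Finset.univ.erase i, g i k) = (∑ i, ∑ k, g i k) - ∑ i, g i i := by
      intro g
      rw [← Finset.sum_sub_distrib]
      exact Finset.sum_congr rfl fun i _ => Finset.sum_erase_eq_sub (Finset.mem_univ i)
    have sumsplit : ∀ (x : Fin m → ℝ) (y : Fin n → ℝ),
        (∑ i, ∑ k, x i * x k * C i k y)
          = (∑ i, x i ^ 2) * C 0 0 y
            + ((∑ i, x i) ^ 2 - ∑ i, x i ^ 2) * ((C 0 1 y + C 1 0 y) / 2) := by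
      intro x y
      set S := ∑ i, ∑ k ∈ Finset.univ.erase i, x i * x k * C i k y with hS
      set S' := ∑ i, ∑ k ∈ Finset.univ.erase i, x i * x k * C k i y with hS'
      have hswap : (∑ i, ∑ k, x i * x k * C i k y) = (∑ i, ∑ k, x i * x k * C k i y) := by
        rw [Finset.sum_comm]
        exact Finset.sum_congr rfl fun k _ => Finset.sum_congr rfl fun i _ => by ring
      have hdiagE : (∑ i, x i * x i * C i i y) = (∑ i, x i ^ 2) * C 0 0 y := by
        rw [Finset.sum_mul]
        exact Finset.sum_congr rfl fun i _ => by rw [hE i y]; ring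
      have hSS' : S = S' := by
        rw [hS, hS', hsub, hsub, ← hswap]
      have h2S : S + S' = ((∑ i, x i) ^ 2 - ∑ i, x i ^ 2) * (C 0 1 y + C 1 0 y) := by
        rw [hS, hS', ← Finset.sum_add_distrib]
        have : ∀ i : Fin m, ((∑ k ∈ Finset.univ.erase i, x i * x k * C i k y)
              + ∑ k ∈ Finset.univ.erase i, x i * x k * C k i y)
            = (x i * (C 0 1 y + C 1 0 y)) * ((∑ k, x k) - x i) := by
          intro i
          rw [← Finset.sum_add_distrib, ← Finset.sum_erase_eq_sub (Finset.mem_univ i),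
            Finset.mul_sum]
          refine Finset.sum_congr rfl fun k hk => ?_
          have hki : k ≠ i := (Finset.mem_erase.mp hk).1
          rw [show x i * x k * C i k y + x i * x k * C k i y
              = x i * x k * (C i k y + C k i y) by ring,
            hDq i k (Ne.symm hki) y]
          ring
        rw [Finset.sum_congr rfl fun i _ => this i]
        have expand : ∀ i : Fin m, (x i * (C 0 1 y + C 1 0 y)) * ((∑ k, x k) - x i)
            = (x i * (∑ k, x k)) * (C 0 1 y + C 1 0 y) - x i ^ 2 * (C 0 1 y + C 1 0 y) := by
          intro i; ring
        rw [Finset.sum_congr rfl fun i _ => expand i, Finset.sum_sub_distrib,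
          ← Finset.sum_mul, ← Finset.sum_mul, ← Finset.sum_mul]
        ring
      have htot : (∑ i, ∑ k, x i * x k * C i k y)
          = (∑ i, x i * x i * C i i y) + S := by
        rw [hS, hsub]; ring
      rw [htot, hdiagE]
      have : S = ((∑ i, x i) ^ 2 - ∑ i, x i ^ 2) * (C 0 1 y + C 1 0 y) / 2 := by
        rw [hSS'] at h2S ⊢
        linarith
      rw [this]
      ring

    -- coefficient matrices
    have hmR : (0:ℝ) < (m:ℝ) := by
      have : 0 < m := by omega
      exact_mod_cast this
    set α : Fin m → Fin m → ℝ := fun i k => (if i = k then 1 else 0) - 1/(m:ℝ) with hα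
    set β : Fin m → Fin m → ℝ := fun _ _ => 1/(m:ℝ) with hβ
    set bb : Fin n → Fin n → ℝ :=
      fun j l => (a 0 j 0 l + a 1 j 1 l - a 0 j 1 l - a 1 j 0 l)/2 with hbb
    set cc : Fin n → Fin n → ℝ := fun j l => (∑ i, ∑ k, a i j k l)/(m:ℝ) with hcc
    have hsq : ∀ x : Fin m → ℝ, (∑ i, ∑ k, x i * x k) = (∑ i, x i)^2 := by
      intro x
      rw [sq, Finset.sum_mul_sum]
    have qα : ∀ x : Fin m → ℝ,
        (∑ i, ∑ k, α i k * x i * x k) = (∑ i, x i ^ 2) - (∑ i, x i)^2/(m:ℝ) := by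
      intro x
      have hterm : ∀ i k : Fin m, α i k * x i * x k
          = (if i = k then x i * x k else 0) - 1/(m:ℝ) * (x i * x k) := by
        intro i k
        by_cases h : i = k <;> simp [hα, h] <;> ring
      calc (∑ i, ∑ k, α i k * x i * x k)
          = ∑ i, ∑ k, ((if i = k then x i * x k else 0) - 1/(m:ℝ) * (x i * x k)) :=
            Finset.sum_congr rfl fun i _ => Finset.sum_congr rfl fun k _ => hterm i k
        _ = (∑ i, ∑ k, (if i = k then x i * x k else 0))
              - 1/(m:ℝ) * (∑ i, ∑ k, x i * x k) := by
            simp only [Finset.sum_sub_distrib, Finset.mul_sum]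
        _ = (∑ i, x i ^ 2) - (∑ i, x i)^2/(m:ℝ) := by
            rw [hsq]
            congr 1
            · refine Finset.sum_congr rfl fun i _ => ?_
              rw [Finset.sum_ite_eq Finset.univ i (fun k => x i * x k)]
              simp [sq]
            · ring
    have qβ : ∀ x : Fin m → ℝ,
        (∑ i, ∑ k, β i k * x i * x k) = (∑ i, x i)^2/(m:ℝ) := by
      intro x
      have : (∑ i, ∑ k, β i k * x i * x k) = 1/(m:ℝ) * (∑ i, ∑ k, x i * x k) := by
        simp only [hβ, Finset.mul_sum]
        exact Finset.sum_congr rfl fun i _ => Finset.sum_congr rfl fun k _ => by ring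
      rw [this, hsq]
      ring
    have qbb : ∀ y : Fin n → ℝ,
        (∑ j, ∑ l, bb j l * y j * y l)
          = (C 0 0 y + C 1 1 y - C 0 1 y - C 1 0 y)/2 := by
      intro y
      calc (∑ j, ∑ l, bb j l * y j * y l)
          = ∑ j, ∑ l, ((a 0 j 0 l * y j * y l + a 1 j 1 l * y j * y l)
              - (a 0 j 1 l * y j * y l + a 1 j 0 l * y j * y l))/2 := by
            refine Finset.sum_congr rfl fun j _ => Finset.sum_congr rfl fun l _ => ?_
            rw [hbb]; ring
        _ = (C 0 0 y + C 1 1 y - C 0 1 y - C 1 0 y)/2 := by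
            simp only [hC, sub_add_eq_sub_sub, sub_div, add_div, Finset.sum_div,
              Finset.sum_sub_distrib, Finset.sum_add_distrib]
    have qcc : ∀ y : Fin n → ℝ,
        (∑ j, ∑ l, cc j l * y j * y l) = (∑ i, ∑ k, C i k y)/(m:ℝ) := by
      intro y
      calc (∑ j, ∑ l, cc j l * y j * y l)
          = ∑ j, ∑ l, ∑ i, ∑ k, a i j k l * y j * y l / (m:ℝ) := by
            refine Finset.sum_congr rfl fun j _ => Finset.sum_congr rfl fun l _ => ?_
            simp only [hcc]
            rw [show (∑ i, ∑ k, a i j k l)/(m:ℝ) * y j * y l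
                = (∑ i, ∑ k, a i j k l) * (y j * y l / (m:ℝ)) from by ring,
              Finset.sum_mul]
            refine Finset.sum_congr rfl fun i _ => ?_
            rw [Finset.sum_mul]
            exact Finset.sum_congr rfl fun k _ => by ring
        _ = ∑ j, ∑ i, ∑ l, ∑ k, a i j k l * y j * y l / (m:ℝ) :=
            Finset.sum_congr rfl fun j _ => Finset.sum_comm
        _ = ∑ i, ∑ j, ∑ l, ∑ k, a i j k l * y j * y l / (m:ℝ) := Finset.sum_comm
        _ = ∑ i, ∑ j, ∑ k, ∑ l, a i j k l * y j * y l / (m:ℝ) :=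
            Finset.sum_congr rfl fun i _ => Finset.sum_congr rfl fun j _ => Finset.sum_comm
        _ = ∑ i, ∑ k, ∑ j, ∑ l, a i j k l * y j * y l / (m:ℝ) :=
            Finset.sum_congr rfl fun i _ => Finset.sum_comm
        _ = (∑ i, ∑ k, C i k y)/(m:ℝ) := by
            simp only [hC, Finset.sum_div]
    -- value of the all-ones sum
    have hones : ∀ y : Fin n → ℝ, (∑ i, ∑ k, C i k y)
        = (m:ℝ) * C 0 0 y + ((m:ℝ)^2 - (m:ℝ)) * ((C 0 1 y + C 1 0 y)/2) := by
      intro y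
      have h1 := sumsplit (fun _ => (1:ℝ)) y
      simp only [one_mul, one_pow] at h1
      rw [h1]
      simp [Finset.card_univ]
    have hPones : ∀ y : Fin n → ℝ, P (fun _ => (1:ℝ)) y = ∑ i, ∑ k, C i k y := by
      intro y
      rw [hPc]
      simp
    -- nonnegativity facts
    have hαpos : ∀ x : Fin m → ℝ, 0 ≤ ∑ i, ∑ k, α i k * x i * x k := by
      intro x
      rw [qα x, sub_nonneg, div_le_iff₀ hmR]
      have h := sq_sum_le_card_mul_sum_sq (s := (Finset.univ : Finset (Fin m))) (f := x)
      simp only [Finset.card_univ, Fintype.card_fin] at h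
      calc (∑ i, x i)^2 ≤ (m:ℝ) * ∑ i, x i ^ 2 := by exact_mod_cast h
        _ = (∑ i, x i ^ 2) * (m:ℝ) := by ring
    have hβpos : ∀ x : Fin m → ℝ, 0 ≤ ∑ i, ∑ k, β i k * x i * x k := by
      intro x
      rw [qβ x]
      positivity
    have hbbpos : ∀ y : Fin n → ℝ, 0 ≤ ∑ j, ∑ l, bb j l * y j * y l := by
      intro y
      rw [qbb y]
      have h := hpsd ((1:ℝ) • e 0 + (-1:ℝ) • e 1) y
      rw [heval2 1 (-1) 0 1 y] at h
      linarith
    have hccpos : ∀ y : Fin n → ℝ, 0 ≤ ∑ j, ∑ l, cc j l * y j * y l := by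
      intro y
      rw [qcc y, ← hPones y]
      exact div_nonneg (hpsd _ y) (le_of_lt hmR)
    refine assemble P α β bb cc hαpos hβpos hbbpos hccpos ?_
    intro x y
    rw [hPc, sumsplit, qα, qβ, qbb, qcc, hones, hE 1 y]
    have hm0 : (m:ℝ) ≠ 0 := ne_of_gt hmR
    field_simp
    ring
end

section
/- For every m ≥ 2, the biquadratic form P(x,y) = x₁²y₁² + x₁²y₂² + Σ_{i=2}^m x_i² y_{c(i)}², where each c(i) ∈ {1,2}, is a sum of m+1 squares of bilinear forms but cannot be written as a sum of m squares of bilinear forms. -/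
open Matrix

private lemma dot_std' {m : ℕ} (x : Fin m → ℝ) (y : Fin 2 → ℝ) (i : Fin m) (j : Fin 2) :
    x ⬝ᵥ (Matrix.single i j (1:ℝ)).mulVec y = x i * y j := by
  simp [dotProduct, Matrix.mulVec, Matrix.single, ite_and, Finset.mul_sum]

private lemma quad_eq' {n : ℕ} (A B : Matrix (Fin n) (Fin n) ℝ)
    (hA : Aᵀ = A) (hB : Bᵀ = B)
    (h : ∀ x, x ⬝ᵥ A.mulVec x = x ⬝ᵥ B.mulVec x) : A = B := by
  ext k l
  have h1 := h (Pi.single k 1)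
  have h2 := h (Pi.single l 1)
  have h3 := h (Pi.single k 1 + Pi.single l 1)
  simp only [Matrix.mulVec_add, dotProduct_add, add_dotProduct,
    Matrix.mulVec_single, single_dotProduct, mul_one, MulOpposite.op_one, one_smul, one_mul,
    Matrix.col_apply] at h1 h2 h3
  have hAs : A k l = A l k := by
    have := congrFun (congrFun hA k) l; rw [Matrix.transpose_apply] at this; exact this.symm
  have hBs : B k l = B l k := by
    have := congrFun (congrFun hB k) l; rw [Matrix.transpose_apply] at this; exact this.symm
  linarith

private lemma sq_sum_eq' {n : ℕ} (v : Fin n → Fin n → ℝ) (x : Fin n → ℝ) :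
    (∑ p, (x ⬝ᵥ v p)^2) = x ⬝ᵥ (Matrix.of (fun k l => ∑ p, v p k * v p l)).mulVec x := by
  simp only [dotProduct, Matrix.mulVec, Matrix.of_apply, sq, Finset.mul_sum, Finset.sum_mul]
  rw [Finset.sum_comm]
  refine Finset.sum_congr rfl fun k _ => ?_
  rw [Finset.sum_comm]
  refine Finset.sum_congr rfl fun l _ => ?_
  exact Finset.sum_congr rfl fun p _ => by ring

theorem stmt_9 (m : ℕ) (hm : 2 ≤ m) (c : Fin m → Fin 2)
    (P : (Fin m → ℝ) → (Fin 2 → ℝ) → ℝ)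
    (hP : ∀ x y, P x y =
        (x ⟨0, by omega⟩) ^ 2 * (y 0) ^ 2 + (x ⟨0, by omega⟩) ^ 2 * (y 1) ^ 2
        + ∑ i : Fin m, if 1 ≤ (i : ℕ) then (x i) ^ 2 * (y (c i)) ^ 2 else 0) :
    (∃ W : Fin (m + 1) → Matrix (Fin m) (Fin 2) ℝ,
        ∀ x y, P x y = ∑ p, (x ⬝ᵥ (W p).mulVec y) ^ 2) ∧
    ¬ (∃ W : Fin m → Matrix (Fin m) (Fin 2) ℝ,
        ∀ x y, P x y = ∑ p, (x ⬝ᵥ (W p).mulVec y) ^ 2) := by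
  haveI : NeZero m := ⟨by omega⟩
  have h00 : (⟨0, by omega⟩ : Fin m) = 0 := rfl
  have hval0 : ∀ i : Fin m, ((i:ℕ) = 0) = (i = 0) := fun i => by
    refine propext ⟨fun h => Fin.ext (by simp [h]), fun h => by simp [h]⟩
  constructor
  · -- existence of m+1 squares
    refine ⟨Fin.cons (Matrix.single 0 0 1)
      (fun i => if (i:ℕ) = 0 then Matrix.single 0 1 1
        else Matrix.single i (c i) 1), fun x y => ?_⟩
    rw [hP, Fin.sum_univ_succ]
    simp only [Fin.cons_zero, Fin.cons_succ, h00]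
    rw [dot_std']
    have step : ∀ i : Fin m,
        (x ⬝ᵥ (if (i:ℕ) = 0 then Matrix.single 0 1 (1:ℝ)
          else Matrix.single i (c i) 1).mulVec y) ^ 2
        = (if (i:ℕ) = 0 then (x 0 * y 1)^2 else 0)
          + (if 1 ≤ (i:ℕ) then (x i)^2 * (y (c i))^2 else 0) := by
      intro i
      rcases Nat.eq_zero_or_pos (i:ℕ) with h | h
      · rw [if_pos h, if_pos h, if_neg (by omega), dot_std', add_zero]
      · rw [if_neg (by omega), if_neg (by omega), if_pos (by omega : 1 ≤ (i:ℕ)), dot_std', zero_add]; ring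
    rw [Finset.sum_congr rfl (fun i _ => step i), Finset.sum_add_distrib]
    have : (∑ i : Fin m, if (i:ℕ) = 0 then (x 0 * y 1)^2 else 0) = (x 0 * y 1)^2 := by
      simp only [hval0]
      rw [Finset.sum_ite_eq' Finset.univ (0 : Fin m) (fun _ => (x 0 * y 1)^2)]
      simp
    rw [this]; ring
  · -- no m squares
    rintro ⟨W, hW⟩
    classical
    set b := (Finset.univ.filter (fun i : Fin m => 1 ≤ (i:ℕ) ∧ c i = 1)).card with hb
    set d : (Fin 2 → ℝ) → Fin m → ℝ :=
      fun y i => if (i:ℕ) = 0 then y 0 ^ 2 + y 1 ^ 2 else (y (c i)) ^ 2 with hd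
    have hDquad : ∀ x y, x ⬝ᵥ (Matrix.diagonal (d y)).mulVec x = P x y := by
      intro x y
      rw [hP]
      have : x ⬝ᵥ (Matrix.diagonal (d y)).mulVec x = ∑ i, x i * (d y i * x i) := by
        simp [dotProduct, Matrix.mulVec_diagonal]
      rw [this]
      have step : ∀ i : Fin m, x i * (d y i * x i)
          = (if (i:ℕ) = 0 then (x 0)^2 * (y 0)^2 + (x 0)^2 * (y 1)^2 else 0)
            + (if 1 ≤ (i:ℕ) then (x i)^2 * (y (c i))^2 else 0) := by
        intro i
        rcases Nat.eq_zero_or_pos (i:ℕ) with h | h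
        · have hi0 : i = 0 := Fin.ext (by simp [h])
          subst hi0
          rw [hd]; simp only [h00]
          norm_num
          ring
        · rw [hd]; simp only
          rw [if_neg (by omega), if_neg (by omega), if_pos (by omega : 1 ≤ (i:ℕ)), zero_add]; ring
      rw [Finset.sum_congr rfl (fun i _ => step i), Finset.sum_add_distrib]
      have : (∑ i : Fin m, if (i:ℕ) = 0 then (x 0)^2 * (y 0)^2 + (x 0)^2 * (y 1)^2 else 0)
          = (x 0)^2 * (y 0)^2 + (x 0)^2 * (y 1)^2 := by
        simp only [hval0]
        rw [Finset.sum_ite_eq' Finset.univ (0 : Fin m)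
          (fun _ => (x 0)^2 * (y 0)^2 + (x 0)^2 * (y 1)^2)]
        simp
      rw [this, h00]
    -- the Gram identity
    set M : (Fin 2 → ℝ) → Matrix (Fin m) (Fin m) ℝ :=
      fun y => Matrix.of (fun k p => (W p).mulVec y k) with hM
    have key : ∀ y, M y * (M y)ᵀ = Matrix.diagonal (d y) := by
      intro y
      have h1 : M y * (M y)ᵀ
          = Matrix.of (fun k l => ∑ p, (W p).mulVec y k * (W p).mulVec y l) := by
        ext k l; simp [Matrix.mul_apply, hM]
      rw [h1]
      apply quad_eq'
      · ext k l
        simp only [Matrix.transpose_apply, Matrix.of_apply]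
        exact Finset.sum_congr rfl fun p _ => mul_comm _ _
      · exact Matrix.diagonal_transpose _
      · intro x
        rw [← sq_sum_eq' (fun p => (W p).mulVec y) x, hDquad, hW]
    have hdet : ∀ y, (M y).det ^ 2 = ∏ i, d y i := by
      intro y
      have := congrArg Matrix.det (key y)
      rwa [Matrix.det_mul, Matrix.det_transpose, ← sq, Matrix.det_diagonal] at this
    -- product of diagonal entries at y = ![1,t]
    have prodd : ∀ t : ℝ, (∏ i, d ![1, t] i) = (1 + t^2) * t^(2*b) := by
      intro t
      have step : ∀ i : Fin m, d ![1, t] i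
          = (if (i:ℕ) = 0 then 1 + t^2 else 1)
            * (if 1 ≤ (i:ℕ) ∧ c i = 1 then t^2 else 1) := by
        intro i
        rcases Nat.eq_zero_or_pos (i:ℕ) with h | h
        · rw [hd]; simp only
          rw [if_pos h, if_pos h, if_neg (by omega)]
          norm_num
        · rw [hd]; simp only
          rw [if_neg (by omega), if_neg (by omega)]
          by_cases hc : c i = 1
          · rw [if_pos ⟨by omega, hc⟩, hc]; simp
          · have hc0 : c i = 0 := by omega
            rw [if_neg (fun hh => hc hh.2), hc0]; simp
      rw [Finset.prod_congr rfl (fun i _ => step i), Finset.prod_mul_distrib]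
      have e1 : (∏ i : Fin m, if (i:ℕ) = 0 then 1 + t^2 else 1) = 1 + t^2 := by
        simp only [hval0]
        rw [Finset.prod_ite_eq' Finset.univ (0 : Fin m) (fun _ => 1 + t^2)]
        simp
      have e2 : (∏ i : Fin m, if 1 ≤ (i:ℕ) ∧ c i = 1 then t^2 else 1) = t^(2*b) := by
        rw [Finset.prod_ite, Finset.prod_const, Finset.prod_const, one_pow, mul_one,
          ← hb, ← pow_mul]
      rw [e1, e2]
    -- the determinant polynomial
    set N : Matrix (Fin m) (Fin m) (Polynomial ℝ) :=
      Matrix.of (fun k p => Polynomial.C ((W p) k 0) + Polynomial.C ((W p) k 1) * Polynomial.X)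
      with hN
    set g : Polynomial ℝ := N.det with hg
    have hgev : ∀ t : ℝ, g.eval t = (M ![1, t]).det := by
      intro t
      have h1 : g.eval t = (Polynomial.evalRingHom t) N.det := rfl
      rw [h1, RingHom.map_det]
      congr 1
      ext k p
      simp only [hN, hM, RingHom.mapMatrix_apply, Matrix.map_apply, Matrix.of_apply, Polynomial.coe_evalRingHom,
        Polynomial.eval_add, Polynomial.eval_mul, Polynomial.eval_C, Polynomial.eval_X,
        Matrix.mulVec, dotProduct, Fin.sum_univ_two, Matrix.cons_val_zero, Matrix.cons_val_one,
        Matrix.head_cons]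
      ring
    have hpoly : g ^ 2 = (1 + Polynomial.X ^ 2) * Polynomial.X ^ (2*b) := by
      apply Polynomial.funext
      intro t
      rw [Polynomial.eval_pow, hgev, hdet, prodd]
      simp [Polynomial.eval_pow]
    -- pass to ℂ and derive a contradiction
    set G : Polynomial ℂ := g.map (algebraMap ℝ ℂ) with hG
    have hG2 : G ^ 2 = (1 + Polynomial.X ^ 2) * Polynomial.X ^ (2*b) := by
      have := congrArg (Polynomial.map (algebraMap ℝ ℂ)) hpoly
      rw [Polynomial.map_pow] at this
      rw [hG, this]
      rw [Polynomial.map_mul, Polynomial.map_add, Polynomial.map_one, Polynomial.map_pow,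
        Polynomial.map_pow, Polynomial.map_X]
    have hroot : G.eval Complex.I = 0 := by
      have h2 : (G.eval Complex.I) ^ 2 = 0 := by
        rw [← Polynomial.eval_pow, hG2]
        simp [Complex.I_sq]
      exact pow_eq_zero_iff (two_ne_zero) |>.mp h2
    obtain ⟨h, hh⟩ := Polynomial.dvd_iff_isRoot.mpr hroot
    have e1 : (Polynomial.X - Polynomial.C Complex.I) * (Polynomial.X + Polynomial.C Complex.I)
        = 1 + Polynomial.X ^ 2 := by
      calc (Polynomial.X - Polynomial.C Complex.I) * (Polynomial.X + Polynomial.C Complex.I)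
          = Polynomial.X ^ 2 - (Polynomial.C Complex.I) ^ 2 := by ring
        _ = Polynomial.X ^ 2 - Polynomial.C (Complex.I ^ 2) := by rw [map_pow]
        _ = 1 + Polynomial.X ^ 2 := by rw [Complex.I_sq, map_neg, Polynomial.C_1]; ring
    have hfac : (Polynomial.X - Polynomial.C Complex.I) *
          ((Polynomial.X - Polynomial.C Complex.I) * h ^ 2)
        = (Polynomial.X - Polynomial.C Complex.I) *
          ((Polynomial.X + Polynomial.C Complex.I) * Polynomial.X ^ (2*b)) := by
      calc (Polynomial.X - Polynomial.C Complex.I) *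
            ((Polynomial.X - Polynomial.C Complex.I) * h ^ 2)
          = ((Polynomial.X - Polynomial.C Complex.I) * h) ^ 2 := by ring
        _ = G ^ 2 := by rw [← hh]
        _ = (1 + Polynomial.X ^ 2) * Polynomial.X ^ (2*b) := hG2
        _ = (Polynomial.X - Polynomial.C Complex.I) *
            ((Polynomial.X + Polynomial.C Complex.I) * Polynomial.X ^ (2*b)) := by
            rw [← e1]; ring
    have hcancel := mul_left_cancel₀ (Polynomial.X_sub_C_ne_zero Complex.I) hfac
    have hev := congrArg (Polynomial.eval Complex.I) hcancel
    simp only [Polynomial.eval_mul, Polynomial.eval_sub, Polynomial.eval_add,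
      Polynomial.eval_pow, Polynomial.eval_X, Polynomial.eval_C, sub_self, zero_mul] at hev
    have hne : (Complex.I + Complex.I) * Complex.I ^ (2*b) ≠ 0 := by
      apply mul_ne_zero
      · intro hz
        have : (2 : ℂ) * Complex.I = 0 := by rw [two_mul]; exact hz
        rcases mul_eq_zero.mp this with h' | h'
        · exact two_ne_zero h'
        · exact Complex.I_ne_zero h'
      · exact pow_ne_zero _ Complex.I_ne_zero
    exact hne hev.symm
end

section
/- The 3×3 biquadratic form P(x,y) = x₁²y₁² + x₂²y₂² + x₃²y₃² + x₁²y₂² + x₂²y₃² + x₃²y₁² can be written as a sum of 6 squares of bilinear forms, but cannot be written as a sum of 5 squares of bilinear forms. -/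
open Matrix Finset

private lemma sum2' (u v : Fin 5 → ℝ) :
    ∑ t, (u t + v t) ^ 2 =
      (∑ t, (u t) ^ 2) + (∑ t, (v t) ^ 2) + 2 * ∑ t, u t * v t := by
  have h : ∀ t : Fin 5, (u t + v t) ^ 2 = (u t) ^ 2 + (v t) ^ 2 + 2 * (u t * v t) :=
    fun t => by ring
  simp [h, Finset.sum_add_distrib, Finset.mul_sum]

private lemma sum3' (u v w : Fin 5 → ℝ) :
    ∑ t, (u t + v t + w t) ^ 2 =
      (∑ t, (u t) ^ 2) + (∑ t, (v t) ^ 2) + (∑ t, (w t) ^ 2)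
        + 2 * (∑ t, u t * v t) + 2 * (∑ t, u t * w t) + 2 * ∑ t, v t * w t := by
  have h : ∀ t : Fin 5, (u t + v t + w t) ^ 2 =
      (u t) ^ 2 + (v t) ^ 2 + (w t) ^ 2 + 2 * (u t * v t) + 2 * (u t * w t)
        + 2 * (v t * w t) := fun t => by ring
  simp [h, Finset.sum_add_distrib, Finset.mul_sum]


private def Mof (W : Fin 5 → Matrix (Fin 3) (Fin 3) ℝ) : Matrix (Fin 6) (Fin 5) ℝ :=
  Matrix.of fun p t =>
    match p with
    | 0 => W t 0 0
    | 1 => W t 0 1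
    | 2 => W t 1 1
    | 3 => W t 1 2
    | 4 => W t 2 2
    | 5 => W t 2 0

set_option maxHeartbeats 1000000 in
theorem stmt_11 (P : (Fin 3 → ℝ) → (Fin 3 → ℝ) → ℝ)
    (hP : ∀ x y, P x y =
        (x 0) ^ 2 * (y 0) ^ 2 + (x 1) ^ 2 * (y 1) ^ 2 + (x 2) ^ 2 * (y 2) ^ 2
        + (x 0) ^ 2 * (y 1) ^ 2 + (x 1) ^ 2 * (y 2) ^ 2 + (x 2) ^ 2 * (y 0) ^ 2) :
    (∃ W : Fin 6 → Matrix (Fin 3) (Fin 3) ℝ,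
        ∀ x y, P x y = ∑ p, (x ⬝ᵥ (W p).mulVec y) ^ 2) ∧
    ¬ (∃ W : Fin 5 → Matrix (Fin 3) (Fin 3) ℝ,
        ∀ x y, P x y = ∑ p, (x ⬝ᵥ (W p).mulVec y) ^ 2) := by
  constructor
  · refine ⟨![![![1,0,0],![0,0,0],![0,0,0]],
              ![![0,0,0],![0,1,0],![0,0,0]],
              ![![0,0,0],![0,0,0],![0,0,1]],
              ![![0,1,0],![0,0,0],![0,0,0]],
              ![![0,0,0],![0,0,1],![0,0,0]],
              ![![0,0,0],![0,0,0],![1,0,0]]], fun x y => ?_⟩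
    rw [hP]
    simp [Fin.sum_univ_succ, Matrix.cons_val_succ, Matrix.mulVec, dotProduct,
      Fin.sum_univ_three, Matrix.vecHead, Matrix.vecTail, Matrix.cons_val_two]
    ring
  · rintro ⟨W, hW⟩
    have hW' : ∀ x0 x1 x2 y0 y1 y2 : ℝ,
        x0 ^ 2 * y0 ^ 2 + x1 ^ 2 * y1 ^ 2 + x2 ^ 2 * y2 ^ 2
          + x0 ^ 2 * y1 ^ 2 + x1 ^ 2 * y2 ^ 2 + x2 ^ 2 * y0 ^ 2
        = ∑ p, ((![x0,x1,x2] : Fin 3 → ℝ) ⬝ᵥ (W p).mulVec ![y0,y1,y2]) ^ 2 := by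
      intro x0 x1 x2 y0 y1 y2
      have h := (hP ![x0,x1,x2] ![y0,y1,y2]).symm.trans (hW ![x0,x1,x2] ![y0,y1,y2])
      simpa using h
    have zero_of : ∀ (i j : Fin 3), (0 : ℝ) = (∑ t, (W t i j) ^ 2) → ∀ t, W t i j = 0 := by
      intro i j h t
      have h2 := (Finset.sum_eq_zero_iff_of_nonneg
        (fun s _ => sq_nonneg (W s i j))).mp h.symm t (Finset.mem_univ t)
      exact pow_eq_zero_iff two_ne_zero |>.mp h2
    have z10 : ∀ t, W t 1 0 = 0 := by
      apply zero_of
      have h := hW' 0 1 0 1 0 0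
      norm_num [Matrix.mulVec, dotProduct, Fin.sum_univ_three, Matrix.vecHead,
        Matrix.vecTail, Matrix.cons_val_two] at h
      exact h
    have z21 : ∀ t, W t 2 1 = 0 := by
      apply zero_of
      have h := hW' 0 0 1 0 1 0
      norm_num [Matrix.mulVec, dotProduct, Fin.sum_univ_three, Matrix.vecHead,
        Matrix.vecTail, Matrix.cons_val_two] at h
      exact h
    have z02 : ∀ t, W t 0 2 = 0 := by
      apply zero_of
      have h := hW' 1 0 0 0 0 1
      norm_num [Matrix.mulVec, dotProduct, Fin.sum_univ_three, Matrix.vecHead,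
        Matrix.vecTail, Matrix.cons_val_two] at h
      exact h
    -- evaluations
    have haa := hW' 1 0 0 1 0 0
    have hbb := hW' 1 0 0 0 1 0
    have hcc := hW' 0 1 0 0 1 0
    have hdd := hW' 0 1 0 0 0 1
    have hee := hW' 0 0 1 0 0 1
    have hff := hW' 0 0 1 1 0 0
    have hab := hW' 1 0 0 1 1 0
    have hbc := hW' 1 1 0 0 1 0
    have hcd := hW' 0 1 0 0 1 1
    have hde := hW' 0 1 1 0 0 1
    have hfe := hW' 0 0 1 1 0 1
    have haf := hW' 1 0 1 1 0 0
    have had := hW' 1 1 0 1 0 1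
    have hbe := hW' 1 0 1 0 1 1
    have hcf := hW' 0 1 1 1 1 0
    have hac := hW' 1 1 0 1 1 0
    have hbd := hW' 1 1 0 0 1 1
    have hce := hW' 0 1 1 0 1 1
    have hdf := hW' 0 1 1 1 0 1
    have hae := hW' 1 0 1 1 0 1
    have hbf := hW' 1 0 1 1 1 0
    norm_num [Matrix.mulVec, dotProduct, Fin.sum_univ_three, Matrix.vecHead, Matrix.vecTail, Matrix.cons_val_two, z10, z21, z02] at haa hbb hcc hdd hee hff hab hbc hcd hde hfe haf
    norm_num [Matrix.mulVec, dotProduct, Fin.sum_univ_three, Matrix.vecHead, Matrix.vecTail, Matrix.cons_val_two, z10, z21, z02] at had hbe hcf hac hbd hce hdf hae hbf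
    have Sab : ∑ t, W t 0 0 * W t 0 1 = 0 := by
      have e := sum2' (fun t => W t 0 0) (fun t => W t 0 1)
      linarith [hab, e, haa, hbb, hcc, hdd, hee, hff]
    have Sbc : ∑ t, W t 0 1 * W t 1 1 = 0 := by
      have e := sum2' (fun t => W t 0 1) (fun t => W t 1 1)
      linarith [hbc, e, haa, hbb, hcc, hdd, hee, hff]
    have Scd : ∑ t, W t 1 1 * W t 1 2 = 0 := by
      have e := sum2' (fun t => W t 1 1) (fun t => W t 1 2)
      linarith [hcd, e, haa, hbb, hcc, hdd, hee, hff]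
    have Sde : ∑ t, W t 1 2 * W t 2 2 = 0 := by
      have e := sum2' (fun t => W t 1 2) (fun t => W t 2 2)
      linarith [hde, e, haa, hbb, hcc, hdd, hee, hff]
    have Sfe : ∑ t, W t 2 0 * W t 2 2 = 0 := by
      have e := sum2' (fun t => W t 2 0) (fun t => W t 2 2)
      linarith [hfe, e, haa, hbb, hcc, hdd, hee, hff]
    have Saf : ∑ t, W t 0 0 * W t 2 0 = 0 := by
      have e := sum2' (fun t => W t 0 0) (fun t => W t 2 0)
      linarith [haf, e, haa, hbb, hcc, hdd, hee, hff]
    have Sad : ∑ t, W t 0 0 * W t 1 2 = 0 := by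
      have e := sum2' (fun t => W t 0 0) (fun t => W t 1 2)
      linarith [had, e, haa, hbb, hcc, hdd, hee, hff]
    have Sbe : ∑ t, W t 0 1 * W t 2 2 = 0 := by
      have e := sum2' (fun t => W t 0 1) (fun t => W t 2 2)
      linarith [hbe, e, haa, hbb, hcc, hdd, hee, hff]
    have Scf : ∑ t, W t 1 1 * W t 2 0 = 0 := by
      have e := sum2' (fun t => W t 1 1) (fun t => W t 2 0)
      linarith [hcf, e, haa, hbb, hcc, hdd, hee, hff]
    have Sac : ∑ t, W t 0 0 * W t 1 1 = 0 := by
      have e := sum3' (fun t => W t 0 0) (fun t => W t 0 1) (fun t => W t 1 1)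
      linarith [hac, e, haa, hbb, hcc, hdd, hee, hff, Sab, Sbc]
    have Sbd : ∑ t, W t 0 1 * W t 1 2 = 0 := by
      have e := sum3' (fun t => W t 0 1) (fun t => W t 1 1) (fun t => W t 1 2)
      have e2 : ∑ t, (W t 0 1 + (W t 1 1 + W t 1 2)) ^ 2 = ∑ t, (W t 0 1 + W t 1 1 + W t 1 2) ^ 2 :=
        Finset.sum_congr rfl fun t _ => by ring
      linarith [hbd, e, haa, hbb, hcc, hdd, hee, hff, Sbc, Scd, e2]
    have Sce : ∑ t, W t 1 1 * W t 2 2 = 0 := by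
      have e := sum3' (fun t => W t 1 1) (fun t => W t 1 2) (fun t => W t 2 2)
      linarith [hce, e, haa, hbb, hcc, hdd, hee, hff, Scd, Sde]
    have Sdf : ∑ t, W t 1 2 * W t 2 0 = 0 := by
      have e := sum3' (fun t => W t 1 2) (fun t => W t 2 0) (fun t => W t 2 2)
      have e2 : ∑ t, (W t 1 2 + (W t 2 0 + W t 2 2)) ^ 2 = ∑ t, (W t 1 2 + W t 2 0 + W t 2 2) ^ 2 :=
        Finset.sum_congr rfl fun t _ => by ring
      linarith [hdf, e, haa, hbb, hcc, hdd, hee, hff, Sde, Sfe, e2]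
    have Sae : ∑ t, W t 0 0 * W t 2 2 = 0 := by
      have e := sum3' (fun t => W t 0 0) (fun t => W t 2 0) (fun t => W t 2 2)
      have e2 : ∑ t, (W t 0 0 + (W t 2 0 + W t 2 2)) ^ 2 = ∑ t, (W t 0 0 + W t 2 0 + W t 2 2) ^ 2 :=
        Finset.sum_congr rfl fun t _ => by ring
      linarith [hae, e, haa, hbb, hcc, hdd, hee, hff, Saf, Sfe, e2]
    have Sbf : ∑ t, W t 0 1 * W t 2 0 = 0 := by
      have e := sum3' (fun t => W t 0 0) (fun t => W t 0 1) (fun t => W t 2 0)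
      linarith [hbf, e, haa, hbb, hcc, hdd, hee, hff, Sab, Saf]
    have Saa : ∑ t, W t 0 0 * W t 0 0 = 1 := by
      have e : (∑ t, W t 0 0 * W t 0 0) = ∑ t, (W t 0 0) ^ 2 :=
        Finset.sum_congr rfl fun t _ => (sq (W t 0 0)).symm
      linarith [haa, e]
    have Sbb : ∑ t, W t 0 1 * W t 0 1 = 1 := by
      have e : (∑ t, W t 0 1 * W t 0 1) = ∑ t, (W t 0 1) ^ 2 :=
        Finset.sum_congr rfl fun t _ => (sq (W t 0 1)).symm
      linarith [hbb, e]
    have Scc : ∑ t, W t 1 1 * W t 1 1 = 1 := by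
      have e : (∑ t, W t 1 1 * W t 1 1) = ∑ t, (W t 1 1) ^ 2 :=
        Finset.sum_congr rfl fun t _ => (sq (W t 1 1)).symm
      linarith [hcc, e]
    have Sdd : ∑ t, W t 1 2 * W t 1 2 = 1 := by
      have e : (∑ t, W t 1 2 * W t 1 2) = ∑ t, (W t 1 2) ^ 2 :=
        Finset.sum_congr rfl fun t _ => (sq (W t 1 2)).symm
      linarith [hdd, e]
    have See : ∑ t, W t 2 2 * W t 2 2 = 1 := by
      have e : (∑ t, W t 2 2 * W t 2 2) = ∑ t, (W t 2 2) ^ 2 :=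
        Finset.sum_congr rfl fun t _ => (sq (W t 2 2)).symm
      linarith [hee, e]
    have Sff : ∑ t, W t 2 0 * W t 2 0 = 1 := by
      have e : (∑ t, W t 2 0 * W t 2 0) = ∑ t, (W t 2 0) ^ 2 :=
        Finset.sum_congr rfl fun t _ => (sq (W t 2 0)).symm
      linarith [hff, e]
    have Sba : ∑ t, W t 0 1 * W t 0 0 = 0 :=
      (Finset.sum_congr rfl fun t _ => mul_comm (W t 0 1) (W t 0 0)).trans Sab
    have Sca : ∑ t, W t 1 1 * W t 0 0 = 0 :=
      (Finset.sum_congr rfl fun t _ => mul_comm (W t 1 1) (W t 0 0)).trans Sac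
    have Sda : ∑ t, W t 1 2 * W t 0 0 = 0 :=
      (Finset.sum_congr rfl fun t _ => mul_comm (W t 1 2) (W t 0 0)).trans Sad
    have Sea : ∑ t, W t 2 2 * W t 0 0 = 0 :=
      (Finset.sum_congr rfl fun t _ => mul_comm (W t 2 2) (W t 0 0)).trans Sae
    have Sfa : ∑ t, W t 2 0 * W t 0 0 = 0 :=
      (Finset.sum_congr rfl fun t _ => mul_comm (W t 2 0) (W t 0 0)).trans Saf
    have Scb : ∑ t, W t 1 1 * W t 0 1 = 0 :=
      (Finset.sum_congr rfl fun t _ => mul_comm (W t 1 1) (W t 0 1)).trans Sbc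
    have Sdb : ∑ t, W t 1 2 * W t 0 1 = 0 :=
      (Finset.sum_congr rfl fun t _ => mul_comm (W t 1 2) (W t 0 1)).trans Sbd
    have Seb : ∑ t, W t 2 2 * W t 0 1 = 0 :=
      (Finset.sum_congr rfl fun t _ => mul_comm (W t 2 2) (W t 0 1)).trans Sbe
    have Sfb : ∑ t, W t 2 0 * W t 0 1 = 0 :=
      (Finset.sum_congr rfl fun t _ => mul_comm (W t 2 0) (W t 0 1)).trans Sbf
    have Sdc : ∑ t, W t 1 2 * W t 1 1 = 0 :=
      (Finset.sum_congr rfl fun t _ => mul_comm (W t 1 2) (W t 1 1)).trans Scd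
    have Sec : ∑ t, W t 2 2 * W t 1 1 = 0 :=
      (Finset.sum_congr rfl fun t _ => mul_comm (W t 2 2) (W t 1 1)).trans Sce
    have Sfc : ∑ t, W t 2 0 * W t 1 1 = 0 :=
      (Finset.sum_congr rfl fun t _ => mul_comm (W t 2 0) (W t 1 1)).trans Scf
    have Sed : ∑ t, W t 2 2 * W t 1 2 = 0 :=
      (Finset.sum_congr rfl fun t _ => mul_comm (W t 2 2) (W t 1 2)).trans Sde
    have Sfd : ∑ t, W t 2 0 * W t 1 2 = 0 :=
      (Finset.sum_congr rfl fun t _ => mul_comm (W t 2 0) (W t 1 2)).trans Sdf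
    have Sef : ∑ t, W t 2 2 * W t 2 0 = 0 :=
      (Finset.sum_congr rfl fun t _ => mul_comm (W t 2 2) (W t 2 0)).trans Sfe
    have hMM : Mof W * (Mof W)ᵀ = 1 := by
      ext p q
      fin_cases p <;> fin_cases q <;>
        simp [Mof, Matrix.mul_apply, Matrix.transpose_apply, Matrix.of_apply,
          Saa, Sab, Sac, Sad, Sae, Saf, Sba, Sbb, Sbc, Sbd, Sbe, Sbf, Sca, Scb, Scc, Scd, Sce, Scf, Sda, Sdb, Sdc, Sdd, Sde, Sdf, Sea, Seb, Sec, Sed, See, Sef, Sfa, Sfb, Sfc, Sfd, Sfe, Sff]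
    have h6 : (6 : ℕ) ≤ 5 := by
      have h1 : (1 : Matrix (Fin 6) (Fin 6) ℝ).rank = 6 := by
        simp [Matrix.rank_one]
      calc (6 : ℕ) = (Mof W * (Mof W)ᵀ).rank := by rw [hMM, h1]
        _ ≤ (Mof W).rank := Matrix.rank_mul_le_left _ _
        _ ≤ 5 := by simpa using (Mof W).rank_le_card_width
    omega
end

section
/- Suppose the biquadratic form P(x,y) = x₁²y₁² + x₂²y₂² + x₃²y₃² + x₁²y₂² + x₂²y₃² + x₃²y₁² equals Σ_{t=1}^r L_t² with bilinear forms L_t(x,y) = Σ_{a,b} c_{ab}^{(t)} x_a y_b. Then for every (a,b) not in S = {(1,1),(2,2),(3,3),(1,2),(2,3),(3,1)}, all coefficients c_{ab}^{(t)} vanish, and the six vectors (c_{ab}^{(1)},…,c_{ab}^{(r)}) for (a,b) ∈ S are pairwise orthogonal unit vectors in ℝ^r. -/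
open Matrix

private lemma expand2 {r : ℕ} (f g : Fin r → ℝ) :
    ∑ t, (f t + g t) ^ 2 =
      (∑ t, f t * f t) + (∑ t, g t * g t) + 2 * (∑ t, f t * g t) := by
  rw [Finset.mul_sum, ← Finset.sum_add_distrib, ← Finset.sum_add_distrib]
  exact Finset.sum_congr rfl fun t _ => by ring

private lemma expand4 {r : ℕ} (f g h k : Fin r → ℝ) :
    ∑ t, (f t + g t + (h t + k t)) ^ 2 =
      (∑ t, f t * f t) + (∑ t, g t * g t) + (∑ t, h t * h t) + (∑ t, k t * k t)
      + 2 * ((∑ t, f t * g t) + (∑ t, f t * h t) + (∑ t, f t * k t)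
        + (∑ t, g t * h t) + (∑ t, g t * k t) + (∑ t, h t * k t)) := by
  simp only [Finset.mul_sum, ← Finset.sum_add_distrib]
  exact Finset.sum_congr rfl fun t _ => by ring

set_option maxHeartbeats 1000000 in
theorem stmt_12 (r : ℕ) (c : Fin 3 → Fin 3 → Fin r → ℝ)
    (S : Finset (Fin 3 × Fin 3))
    (hS : S = {(0, 0), (1, 1), (2, 2), (0, 1), (1, 2), (2, 0)})
    (hdecomp : ∀ (x y : Fin 3 → ℝ),
        (x 0) ^ 2 * (y 0) ^ 2 + (x 1) ^ 2 * (y 1) ^ 2 + (x 2) ^ 2 * (y 2) ^ 2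
          + (x 0) ^ 2 * (y 1) ^ 2 + (x 1) ^ 2 * (y 2) ^ 2 + (x 2) ^ 2 * (y 0) ^ 2
        = ∑ t, (∑ a, ∑ b, c a b t * x a * y b) ^ 2) :
    (∀ a b, (a, b) ∉ S → ∀ t, c a b t = 0) ∧
    (∀ p ∈ S, c p.1 p.2 ⬝ᵥ c p.1 p.2 = 1) ∧
    (∀ p ∈ S, ∀ q ∈ S, p ≠ q → c p.1 p.2 ⬝ᵥ c q.1 q.2 = 0) := by
  subst hS
  have ez10 := hdecomp ![0,1,0] ![1,0,0]
  simp [Fin.sum_univ_three] at ez10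
  have z10 : ∀ t, c 1 0 t = 0 := by
    intro t
    have h := (Finset.sum_eq_zero_iff_of_nonneg
      (fun i _ => sq_nonneg (c 1 0 i))).mp ez10.symm t (Finset.mem_univ t)
    exact (pow_eq_zero_iff (by norm_num)).mp h
  have ez21 := hdecomp ![0,0,1] ![0,1,0]
  simp [Fin.sum_univ_three] at ez21
  have z21 : ∀ t, c 2 1 t = 0 := by
    intro t
    have h := (Finset.sum_eq_zero_iff_of_nonneg
      (fun i _ => sq_nonneg (c 2 1 i))).mp ez21.symm t (Finset.mem_univ t)
    exact (pow_eq_zero_iff (by norm_num)).mp h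
  have ez02 := hdecomp ![1,0,0] ![0,0,1]
  simp [Fin.sum_univ_three] at ez02
  have z02 : ∀ t, c 0 2 t = 0 := by
    intro t
    have h := (Finset.sum_eq_zero_iff_of_nonneg
      (fun i _ => sq_nonneg (c 0 2 i))).mp ez02.symm t (Finset.mem_univ t)
    exact (pow_eq_zero_iff (by norm_num)).mp h
  have en00 := hdecomp ![1,0,0] ![1,0,0]
  simp [Fin.sum_univ_three] at en00
  simp only [pow_two] at en00
  have n00 : ∑ t, c 0 0 t * c 0 0 t = 1 := en00.symm
  have en11 := hdecomp ![0,1,0] ![0,1,0]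
  simp [Fin.sum_univ_three] at en11
  simp only [pow_two] at en11
  have n11 : ∑ t, c 1 1 t * c 1 1 t = 1 := en11.symm
  have en22 := hdecomp ![0,0,1] ![0,0,1]
  simp [Fin.sum_univ_three] at en22
  simp only [pow_two] at en22
  have n22 : ∑ t, c 2 2 t * c 2 2 t = 1 := en22.symm
  have en01 := hdecomp ![1,0,0] ![0,1,0]
  simp [Fin.sum_univ_three] at en01
  simp only [pow_two] at en01
  have n01 : ∑ t, c 0 1 t * c 0 1 t = 1 := en01.symm
  have en12 := hdecomp ![0,1,0] ![0,0,1]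
  simp [Fin.sum_univ_three] at en12
  simp only [pow_two] at en12
  have n12 : ∑ t, c 1 2 t * c 1 2 t = 1 := en12.symm
  have en20 := hdecomp ![0,0,1] ![1,0,0]
  simp [Fin.sum_univ_three] at en20
  simp only [pow_two] at en20
  have n20 : ∑ t, c 2 0 t * c 2 0 t = 1 := en20.symm
  have ed00_01 := hdecomp ![1,0,0] ![1,1,0]
  simp [Fin.sum_univ_three] at ed00_01
  rw [expand2 (fun t => c 0 0 t) (fun t => c 0 1 t)] at ed00_01
  have d00_01 : ∑ t, c 0 0 t * c 0 1 t = 0 := by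
    have h1 := n00; have h2 := n01
    linarith
  have ed11_12 := hdecomp ![0,1,0] ![0,1,1]
  simp [Fin.sum_univ_three] at ed11_12
  rw [expand2 (fun t => c 1 1 t) (fun t => c 1 2 t)] at ed11_12
  have d11_12 : ∑ t, c 1 1 t * c 1 2 t = 0 := by
    have h1 := n11; have h2 := n12
    linarith
  have ed20_22 := hdecomp ![0,0,1] ![1,0,1]
  simp [Fin.sum_univ_three] at ed20_22
  rw [expand2 (fun t => c 2 0 t) (fun t => c 2 2 t)] at ed20_22
  have d20_22 : ∑ t, c 2 0 t * c 2 2 t = 0 := by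
    have h1 := n20; have h2 := n22
    linarith
  have ed00_20 := hdecomp ![1,0,1] ![1,0,0]
  simp [Fin.sum_univ_three] at ed00_20
  rw [expand2 (fun t => c 0 0 t) (fun t => c 2 0 t)] at ed00_20
  have d00_20 : ∑ t, c 0 0 t * c 2 0 t = 0 := by
    have h1 := n00; have h2 := n20
    linarith
  have ed01_11 := hdecomp ![1,1,0] ![0,1,0]
  simp [Fin.sum_univ_three] at ed01_11
  rw [expand2 (fun t => c 0 1 t) (fun t => c 1 1 t)] at ed01_11
  have d01_11 : ∑ t, c 0 1 t * c 1 1 t = 0 := by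
    have h1 := n01; have h2 := n11
    linarith
  have ed12_22 := hdecomp ![0,1,1] ![0,0,1]
  simp [Fin.sum_univ_three] at ed12_22
  rw [expand2 (fun t => c 1 2 t) (fun t => c 2 2 t)] at ed12_22
  have d12_22 : ∑ t, c 1 2 t * c 2 2 t = 0 := by
    have h1 := n12; have h2 := n22
    linarith
  have ed00_11 := hdecomp ![1,1,0] ![1,1,0]
  simp [Fin.sum_univ_three] at ed00_11
  rw [expand4 (fun t => c 0 0 t) (fun t => c 0 1 t) (fun t => c 1 0 t) (fun t => c 1 1 t)] at ed00_11
  have aux1_1 : ∑ t, c 1 0 t * c 1 0 t = 0 := Finset.sum_eq_zero fun t _ => by rw [z10 t, mul_zero]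
  have aux1_2 : ∑ t, c 0 0 t * c 1 0 t = 0 := Finset.sum_eq_zero fun t _ => by rw [z10 t, mul_zero]
  have aux1_3 : ∑ t, c 0 1 t * c 1 0 t = 0 := Finset.sum_eq_zero fun t _ => by rw [z10 t, mul_zero]
  have aux1_4 : ∑ t, c 1 0 t * c 1 1 t = 0 := Finset.sum_eq_zero fun t _ => by rw [z10 t, zero_mul]
  have d00_11 : ∑ t, c 0 0 t * c 1 1 t = 0 := by
    linarith [n00, n11, n22, n01, n12, n20]
  have ed00_22 := hdecomp ![1,0,1] ![1,0,1]
  simp [Fin.sum_univ_three] at ed00_22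
  rw [expand4 (fun t => c 0 0 t) (fun t => c 0 2 t) (fun t => c 2 0 t) (fun t => c 2 2 t)] at ed00_22
  have aux2_1 : ∑ t, c 0 2 t * c 0 2 t = 0 := Finset.sum_eq_zero fun t _ => by rw [z02 t, mul_zero]
  have aux2_2 : ∑ t, c 0 0 t * c 0 2 t = 0 := Finset.sum_eq_zero fun t _ => by rw [z02 t, mul_zero]
  have aux2_3 : ∑ t, c 0 2 t * c 2 0 t = 0 := Finset.sum_eq_zero fun t _ => by rw [z02 t, zero_mul]
  have aux2_4 : ∑ t, c 0 2 t * c 2 2 t = 0 := Finset.sum_eq_zero fun t _ => by rw [z02 t, zero_mul]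
  have d00_22 : ∑ t, c 0 0 t * c 2 2 t = 0 := by
    linarith [n00, n11, n22, n01, n12, n20]
  have ed00_12 := hdecomp ![1,1,0] ![1,0,1]
  simp [Fin.sum_univ_three] at ed00_12
  rw [expand4 (fun t => c 0 0 t) (fun t => c 0 2 t) (fun t => c 1 0 t) (fun t => c 1 2 t)] at ed00_12
  have aux3_1 : ∑ t, c 0 2 t * c 0 2 t = 0 := Finset.sum_eq_zero fun t _ => by rw [z02 t, mul_zero]
  have aux3_2 : ∑ t, c 1 0 t * c 1 0 t = 0 := Finset.sum_eq_zero fun t _ => by rw [z10 t, mul_zero]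
  have aux3_3 : ∑ t, c 0 0 t * c 0 2 t = 0 := Finset.sum_eq_zero fun t _ => by rw [z02 t, mul_zero]
  have aux3_4 : ∑ t, c 0 0 t * c 1 0 t = 0 := Finset.sum_eq_zero fun t _ => by rw [z10 t, mul_zero]
  have aux3_5 : ∑ t, c 0 2 t * c 1 0 t = 0 := Finset.sum_eq_zero fun t _ => by rw [z10 t, mul_zero]
  have aux3_6 : ∑ t, c 0 2 t * c 1 2 t = 0 := Finset.sum_eq_zero fun t _ => by rw [z02 t, zero_mul]
  have aux3_7 : ∑ t, c 1 0 t * c 1 2 t = 0 := Finset.sum_eq_zero fun t _ => by rw [z10 t, zero_mul]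
  have d00_12 : ∑ t, c 0 0 t * c 1 2 t = 0 := by
    linarith [n00, n11, n22, n01, n12, n20]
  have ed11_22 := hdecomp ![0,1,1] ![0,1,1]
  simp [Fin.sum_univ_three] at ed11_22
  rw [expand4 (fun t => c 1 1 t) (fun t => c 1 2 t) (fun t => c 2 1 t) (fun t => c 2 2 t)] at ed11_22
  have aux4_1 : ∑ t, c 2 1 t * c 2 1 t = 0 := Finset.sum_eq_zero fun t _ => by rw [z21 t, mul_zero]
  have aux4_2 : ∑ t, c 1 1 t * c 2 1 t = 0 := Finset.sum_eq_zero fun t _ => by rw [z21 t, mul_zero]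
  have aux4_3 : ∑ t, c 1 2 t * c 2 1 t = 0 := Finset.sum_eq_zero fun t _ => by rw [z21 t, mul_zero]
  have aux4_4 : ∑ t, c 2 1 t * c 2 2 t = 0 := Finset.sum_eq_zero fun t _ => by rw [z21 t, zero_mul]
  have d11_22 : ∑ t, c 1 1 t * c 2 2 t = 0 := by
    linarith [n00, n11, n22, n01, n12, n20]
  have ed11_20 := hdecomp ![0,1,1] ![1,1,0]
  simp [Fin.sum_univ_three] at ed11_20
  rw [expand4 (fun t => c 1 0 t) (fun t => c 1 1 t) (fun t => c 2 0 t) (fun t => c 2 1 t)] at ed11_20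
  have aux5_1 : ∑ t, c 1 0 t * c 1 0 t = 0 := Finset.sum_eq_zero fun t _ => by rw [z10 t, mul_zero]
  have aux5_2 : ∑ t, c 2 1 t * c 2 1 t = 0 := Finset.sum_eq_zero fun t _ => by rw [z21 t, mul_zero]
  have aux5_3 : ∑ t, c 1 0 t * c 1 1 t = 0 := Finset.sum_eq_zero fun t _ => by rw [z10 t, zero_mul]
  have aux5_4 : ∑ t, c 1 0 t * c 2 0 t = 0 := Finset.sum_eq_zero fun t _ => by rw [z10 t, zero_mul]
  have aux5_5 : ∑ t, c 1 0 t * c 2 1 t = 0 := Finset.sum_eq_zero fun t _ => by rw [z21 t, mul_zero]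
  have aux5_6 : ∑ t, c 1 1 t * c 2 1 t = 0 := Finset.sum_eq_zero fun t _ => by rw [z21 t, mul_zero]
  have aux5_7 : ∑ t, c 2 0 t * c 2 1 t = 0 := Finset.sum_eq_zero fun t _ => by rw [z21 t, mul_zero]
  have d11_20 : ∑ t, c 1 1 t * c 2 0 t = 0 := by
    linarith [n00, n11, n22, n01, n12, n20]
  have ed22_01 := hdecomp ![1,0,1] ![0,1,1]
  simp [Fin.sum_univ_three] at ed22_01
  rw [expand4 (fun t => c 0 1 t) (fun t => c 0 2 t) (fun t => c 2 1 t) (fun t => c 2 2 t)] at ed22_01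
  have aux6_1 : ∑ t, c 0 2 t * c 0 2 t = 0 := Finset.sum_eq_zero fun t _ => by rw [z02 t, mul_zero]
  have aux6_2 : ∑ t, c 2 1 t * c 2 1 t = 0 := Finset.sum_eq_zero fun t _ => by rw [z21 t, mul_zero]
  have aux6_3 : ∑ t, c 0 1 t * c 0 2 t = 0 := Finset.sum_eq_zero fun t _ => by rw [z02 t, mul_zero]
  have aux6_4 : ∑ t, c 0 1 t * c 2 1 t = 0 := Finset.sum_eq_zero fun t _ => by rw [z21 t, mul_zero]
  have aux6_5 : ∑ t, c 0 2 t * c 2 1 t = 0 := Finset.sum_eq_zero fun t _ => by rw [z21 t, mul_zero]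
  have aux6_6 : ∑ t, c 0 2 t * c 2 2 t = 0 := Finset.sum_eq_zero fun t _ => by rw [z02 t, zero_mul]
  have aux6_7 : ∑ t, c 2 1 t * c 2 2 t = 0 := Finset.sum_eq_zero fun t _ => by rw [z21 t, zero_mul]
  have d22_01 : ∑ t, c 0 1 t * c 2 2 t = 0 := by
    linarith [n00, n11, n22, n01, n12, n20]
  have ed01_12 := hdecomp ![1,1,0] ![0,1,1]
  simp [Fin.sum_univ_three] at ed01_12
  rw [expand4 (fun t => c 0 1 t) (fun t => c 0 2 t) (fun t => c 1 1 t) (fun t => c 1 2 t)] at ed01_12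
  have aux7_1 : ∑ t, c 0 2 t * c 0 2 t = 0 := Finset.sum_eq_zero fun t _ => by rw [z02 t, mul_zero]
  have aux7_2 : ∑ t, c 0 1 t * c 0 2 t = 0 := Finset.sum_eq_zero fun t _ => by rw [z02 t, mul_zero]
  have aux7_3 : ∑ t, c 0 2 t * c 1 1 t = 0 := Finset.sum_eq_zero fun t _ => by rw [z02 t, zero_mul]
  have aux7_4 : ∑ t, c 0 2 t * c 1 2 t = 0 := Finset.sum_eq_zero fun t _ => by rw [z02 t, zero_mul]
  have d01_12 : ∑ t, c 0 1 t * c 1 2 t = 0 := by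
    linarith [n00, n11, n22, n01, n12, n20]
  have ed01_20 := hdecomp ![1,0,1] ![1,1,0]
  simp [Fin.sum_univ_three] at ed01_20
  rw [expand4 (fun t => c 0 0 t) (fun t => c 0 1 t) (fun t => c 2 0 t) (fun t => c 2 1 t)] at ed01_20
  have aux8_1 : ∑ t, c 2 1 t * c 2 1 t = 0 := Finset.sum_eq_zero fun t _ => by rw [z21 t, mul_zero]
  have aux8_2 : ∑ t, c 0 0 t * c 2 1 t = 0 := Finset.sum_eq_zero fun t _ => by rw [z21 t, mul_zero]
  have aux8_3 : ∑ t, c 0 1 t * c 2 1 t = 0 := Finset.sum_eq_zero fun t _ => by rw [z21 t, mul_zero]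
  have aux8_4 : ∑ t, c 2 0 t * c 2 1 t = 0 := Finset.sum_eq_zero fun t _ => by rw [z21 t, mul_zero]
  have d01_20 : ∑ t, c 0 1 t * c 2 0 t = 0 := by
    linarith [n00, n11, n22, n01, n12, n20]
  have ed12_20 := hdecomp ![0,1,1] ![1,0,1]
  simp [Fin.sum_univ_three] at ed12_20
  rw [expand4 (fun t => c 1 0 t) (fun t => c 1 2 t) (fun t => c 2 0 t) (fun t => c 2 2 t)] at ed12_20
  have aux9_1 : ∑ t, c 1 0 t * c 1 0 t = 0 := Finset.sum_eq_zero fun t _ => by rw [z10 t, mul_zero]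
  have aux9_2 : ∑ t, c 1 0 t * c 1 2 t = 0 := Finset.sum_eq_zero fun t _ => by rw [z10 t, zero_mul]
  have aux9_3 : ∑ t, c 1 0 t * c 2 0 t = 0 := Finset.sum_eq_zero fun t _ => by rw [z10 t, zero_mul]
  have aux9_4 : ∑ t, c 1 0 t * c 2 2 t = 0 := Finset.sum_eq_zero fun t _ => by rw [z10 t, zero_mul]
  have d12_20 : ∑ t, c 1 2 t * c 2 0 t = 0 := by
    linarith [n00, n11, n22, n01, n12, n20]
  have D00_00 : c 0 0 ⬝ᵥ c 0 0 = 1 := n00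
  have D11_11 : c 1 1 ⬝ᵥ c 1 1 = 1 := n11
  have D22_22 : c 2 2 ⬝ᵥ c 2 2 = 1 := n22
  have D01_01 : c 0 1 ⬝ᵥ c 0 1 = 1 := n01
  have D12_12 : c 1 2 ⬝ᵥ c 1 2 = 1 := n12
  have D20_20 : c 2 0 ⬝ᵥ c 2 0 = 1 := n20
  have D00_11 : c 0 0 ⬝ᵥ c 1 1 = 0 := d00_11
  have D11_00 : c 1 1 ⬝ᵥ c 0 0 = 0 := by rw [dotProduct_comm]; exact D00_11
  have D00_22 : c 0 0 ⬝ᵥ c 2 2 = 0 := d00_22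
  have D22_00 : c 2 2 ⬝ᵥ c 0 0 = 0 := by rw [dotProduct_comm]; exact D00_22
  have D00_01 : c 0 0 ⬝ᵥ c 0 1 = 0 := d00_01
  have D01_00 : c 0 1 ⬝ᵥ c 0 0 = 0 := by rw [dotProduct_comm]; exact D00_01
  have D00_12 : c 0 0 ⬝ᵥ c 1 2 = 0 := d00_12
  have D12_00 : c 1 2 ⬝ᵥ c 0 0 = 0 := by rw [dotProduct_comm]; exact D00_12
  have D00_20 : c 0 0 ⬝ᵥ c 2 0 = 0 := d00_20
  have D20_00 : c 2 0 ⬝ᵥ c 0 0 = 0 := by rw [dotProduct_comm]; exact D00_20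
  have D11_22 : c 1 1 ⬝ᵥ c 2 2 = 0 := d11_22
  have D22_11 : c 2 2 ⬝ᵥ c 1 1 = 0 := by rw [dotProduct_comm]; exact D11_22
  have D01_11 : c 0 1 ⬝ᵥ c 1 1 = 0 := d01_11
  have D11_01 : c 1 1 ⬝ᵥ c 0 1 = 0 := by rw [dotProduct_comm]; exact D01_11
  have D11_12 : c 1 1 ⬝ᵥ c 1 2 = 0 := d11_12
  have D12_11 : c 1 2 ⬝ᵥ c 1 1 = 0 := by rw [dotProduct_comm]; exact D11_12
  have D11_20 : c 1 1 ⬝ᵥ c 2 0 = 0 := d11_20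
  have D20_11 : c 2 0 ⬝ᵥ c 1 1 = 0 := by rw [dotProduct_comm]; exact D11_20
  have D01_22 : c 0 1 ⬝ᵥ c 2 2 = 0 := d22_01
  have D22_01 : c 2 2 ⬝ᵥ c 0 1 = 0 := by rw [dotProduct_comm]; exact D01_22
  have D12_22 : c 1 2 ⬝ᵥ c 2 2 = 0 := d12_22
  have D22_12 : c 2 2 ⬝ᵥ c 1 2 = 0 := by rw [dotProduct_comm]; exact D12_22
  have D20_22 : c 2 0 ⬝ᵥ c 2 2 = 0 := d20_22
  have D22_20 : c 2 2 ⬝ᵥ c 2 0 = 0 := by rw [dotProduct_comm]; exact D20_22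
  have D01_12 : c 0 1 ⬝ᵥ c 1 2 = 0 := d01_12
  have D12_01 : c 1 2 ⬝ᵥ c 0 1 = 0 := by rw [dotProduct_comm]; exact D01_12
  have D01_20 : c 0 1 ⬝ᵥ c 2 0 = 0 := d01_20
  have D20_01 : c 2 0 ⬝ᵥ c 0 1 = 0 := by rw [dotProduct_comm]; exact D01_20
  have D12_20 : c 1 2 ⬝ᵥ c 2 0 = 0 := d12_20
  have D20_12 : c 2 0 ⬝ᵥ c 1 2 = 0 := by rw [dotProduct_comm]; exact D12_20
  clear hdecomp ez10 ez21 ez02 en00 en11 en22 en01 en12 en20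
  clear ed00_01 ed11_12 ed20_22 ed00_20 ed01_11 ed12_22
  clear ed00_11 ed00_22 ed00_12 ed11_22 ed11_20 ed22_01 ed01_12 ed01_20 ed12_20
  refine ⟨?_, ?_, ?_⟩
  · intro a b hab t
    fin_cases a <;> fin_cases b <;>
      first
        | exact z10 t
        | exact z21 t
        | exact z02 t
        | (exfalso; apply hab; decide)
  · intro p hp
    simp only [Finset.mem_insert, Finset.mem_singleton] at hp
    rcases hp with rfl | rfl | rfl | rfl | rfl | rfl <;> assumption
  · intro p hp q hq hpq
    simp only [Finset.mem_insert, Finset.mem_singleton] at hp hq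
    rcases hp with rfl | rfl | rfl | rfl | rfl | rfl <;>
      rcases hq with rfl | rfl | rfl | rfl | rfl | rfl <;>
        first
          | (exact absurd rfl hpq)
          | assumption
end

section
/- Let m, n ≥ 2 and let P(x,y) be a biquadratic form in x ∈ ℝ^m, y ∈ ℝ^n that is a sum of squares of bilinear forms. Then P can be written as a sum of at most mn − 1 squares of bilinear forms. -/
open Matrix

section SOS14Helpers

set_option linter.unusedSectionVars false

variable {ι : Type*} [Fintype ι] [DecidableEq ι]

/-- indicator vector -/
def sos14_ind (c : ι) : ι → ℝ := fun a => if a = c then 1 else 0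

lemma sos14_quad_vecMulVec (f g z : ι → ℝ) :
    z ⬝ᵥ (vecMulVec f g) *ᵥ z = (f ⬝ᵥ z) * (g ⬝ᵥ z) := by
  have h : (vecMulVec f g) *ᵥ z = (g ⬝ᵥ z) • f := by
    ext a
    simp only [vecMulVec_apply, mulVec, dotProduct, Pi.smul_apply, smul_eq_mul, Finset.sum_mul]
    exact Finset.sum_congr rfl fun b _ => by ring
  rw [h, dotProduct_smul, smul_eq_mul, dotProduct_comm z f]
  ring

lemma sos14_ind_dot (c : ι) (z : ι → ℝ) : (sos14_ind c) ⬝ᵥ z = z c := by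
  simp [sos14_ind, dotProduct]

lemma sos14_H_herm (p q u v : ι) :
    (vecMulVec (sos14_ind p) (sos14_ind q) + vecMulVec (sos14_ind q) (sos14_ind p)
      - vecMulVec (sos14_ind u) (sos14_ind v)
      - vecMulVec (sos14_ind v) (sos14_ind u)).IsHermitian := by
  unfold Matrix.IsHermitian
  ext a b
  simp only [conjTranspose_apply, Matrix.sub_apply, Matrix.add_apply, vecMulVec_apply,
    star_trivial]
  ring

lemma sos14_G_herm {r : ℕ} (w : Fin r → ι → ℝ) :
    (∑ p, vecMulVec (w p) (w p)).IsHermitian := by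
  unfold Matrix.IsHermitian
  ext a b
  simp only [conjTranspose_apply, Matrix.sum_apply, vecMulVec_apply, star_trivial]
  exact Finset.sum_congr rfl fun p _ => by ring

lemma sos14_sum_quad {r : ℕ} (A : Fin r → Matrix ι ι ℝ) (z : ι → ℝ) :
    z ⬝ᵥ (∑ p, A p) *ᵥ z = ∑ p, z ⬝ᵥ (A p) *ᵥ z := by
  have h1 : (∑ p, A p) *ᵥ z = ∑ p, (A p) *ᵥ z := by
    ext a
    simp [Matrix.mulVec, dotProduct, Matrix.sum_apply, Finset.sum_mul]
    rw [Finset.sum_comm]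
  rw [h1]
  simp [dotProduct, Finset.sum_apply, Finset.mul_sum]
  rw [Finset.sum_comm]

lemma sos14_quad_eigen (A : Matrix ι ι ℝ) (hA : A.IsHermitian) (z : ι → ℝ) :
    z ⬝ᵥ A *ᵥ z
      = ∑ i, hA.eigenvalues i * ((star (hA.eigenvectorUnitary : Matrix ι ι ℝ) *ᵥ z) i) ^ 2 := by
  set U := (hA.eigenvectorUnitary : Matrix ι ι ℝ) with hU
  have hsp := hA.spectral_theorem
  have hD : (RCLike.ofReal ∘ hA.eigenvalues : ι → ℝ) = hA.eigenvalues := by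
    ext i; simp
  rw [hD] at hsp
  conv_lhs => rw [hsp, Unitary.conjStarAlgAut_apply]
  rw [← mulVec_mulVec, ← mulVec_mulVec, dotProduct_mulVec (A := U)]
  have hvm : z ᵥ* U = star U *ᵥ z := by
    have : star U = Uᵀ := by
      rw [star_eq_conjTranspose, conjTranspose_eq_transpose_of_trivial]
    rw [this, mulVec_transpose]
  rw [hvm]
  simp [dotProduct, mulVec_diagonal, sq]
  congr 1; ext i; ring

lemma sos14_unitary_sq_sum (A : Matrix ι ι ℝ) (hA : A.IsHermitian) (z : ι → ℝ) :
    ∑ i, ((star (hA.eigenvectorUnitary : Matrix ι ι ℝ) *ᵥ z) i) ^ 2 = ∑ i, (z i) ^ 2 := by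
  set U := (hA.eigenvectorUnitary : Matrix ι ι ℝ) with hU
  have h1 : ∀ w : ι → ℝ, ∑ i, (w i)^2 = w ⬝ᵥ w := by
    intro w; simp [dotProduct, sq]
  rw [h1, h1]
  have hst : star U = Uᵀ := by
    rw [star_eq_conjTranspose, conjTranspose_eq_transpose_of_trivial]
  rw [hst, mulVec_transpose, ← dotProduct_mulVec, ← mulVec_transpose, mulVec_mulVec]
  have : U * Uᵀ = 1 := by
    have := (Matrix.mem_unitaryGroup_iff).mp hA.eigenvectorUnitary.2
    rwa [star_eq_conjTranspose, conjTranspose_eq_transpose_of_trivial] at this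
  rw [this, one_mulVec]

lemma sos14_posdef_of_eig_pos (A : Matrix ι ι ℝ) (hA : A.PosSemidef)
    (h : ∀ i, hA.1.eigenvalues i ≠ 0) : A.PosDef := by
  refine posDef_iff_dotProduct_mulVec.mpr ⟨hA.1, fun z hz => ?_⟩
  set U := (hA.1.eigenvectorUnitary : Matrix ι ι ℝ) with hUdef
  set w := star U *ᵥ z with hw
  have hz' : star z = z := by simp
  rw [hz', sos14_quad_eigen A hA.1 z]
  have hwne : w ≠ 0 := by
    intro h0
    apply hz
    have : U *ᵥ w = z := by
      rw [hw, mulVec_mulVec, (Matrix.mem_unitaryGroup_iff).mp hA.1.eigenvectorUnitary.2,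
        one_mulVec]
    rw [h0, mulVec_zero] at this
    exact this.symm
  obtain ⟨i, hi⟩ : ∃ i, w i ≠ 0 := by
    by_contra hc
    push_neg at hc
    exact hwne (funext hc)
  refine Finset.sum_pos' (fun j _ => mul_nonneg ?_ (sq_nonneg _)) ⟨i, Finset.mem_univ i, ?_⟩
  · exact hA.eigenvalues_nonneg j
  · exact mul_pos (lt_of_le_of_ne (hA.eigenvalues_nonneg i) (Ne.symm (h i))) (sq_pos_iff.mpr hi)

lemma sos14_posdef_lower (A : Matrix ι ι ℝ) [Nonempty ι] (hA : A.PosDef) :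
    ∃ c : ℝ, 0 < c ∧ ∀ z : ι → ℝ, c * ∑ i, (z i) ^ 2 ≤ z ⬝ᵥ A *ᵥ z := by
  set c := Finset.univ.inf' Finset.univ_nonempty hA.1.eigenvalues with hc
  refine ⟨c, ?_, fun z => ?_⟩
  · obtain ⟨i, _, hi⟩ := Finset.exists_mem_eq_inf' Finset.univ_nonempty hA.1.eigenvalues
    rw [hc, hi]
    exact hA.eigenvalues_pos i
  · rw [sos14_quad_eigen A hA.1 z, ← sos14_unitary_sq_sum A hA.1 z, Finset.mul_sum]
    refine Finset.sum_le_sum fun i _ => ?_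
    exact mul_le_mul_of_nonneg_right (Finset.inf'_le _ (Finset.mem_univ i)) (sq_nonneg _)

lemma sos14_sum_subtype (i₀ : ι) (F : ι → ℝ) (h0 : F i₀ = 0) :
    ∑ s : {i : ι // i ≠ i₀}, F s.1 = ∑ i, F i := by
  rw [← Finset.sum_subtype (p := fun i => i ≠ i₀) (s := Finset.univ \ {i₀}) (by simp) F,
    Finset.sum_eq_sum_sdiff_singleton_add (Finset.mem_univ i₀) F, h0, add_zero]

lemma sos14_bilin {m n : ℕ} (B : Matrix (Fin m) (Fin n) ℝ) (x : Fin m → ℝ) (y : Fin n → ℝ) :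
    x ⬝ᵥ B *ᵥ y = (fun a : Fin m × Fin n => B a.1 a.2) ⬝ᵥ (fun a => x a.1 * y a.2) := by
  simp only [dotProduct, mulVec, Fintype.sum_prod_type, Finset.mul_sum]
  exact Finset.sum_congr rfl fun i _ => Finset.sum_congr rfl fun j _ => by ring

end SOS14Helpers

theorem stmt_14 (m n : ℕ) (hm : 2 ≤ m) (hn : 2 ≤ n)
    (a : Fin m → Fin n → Fin m → Fin n → ℝ)
    (P : (Fin m → ℝ) → (Fin n → ℝ) → ℝ)
    (hP : ∀ x y, P x y = ∑ i, ∑ j, ∑ k, ∑ l, a i j k l * x i * y j * x k * y l)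
    (hsos : ∃ (r : ℕ) (W : Fin r → Matrix (Fin m) (Fin n) ℝ),
        ∀ x y, P x y = ∑ p, (x ⬝ᵥ (W p).mulVec y) ^ 2) :
    ∃ W : Fin (m * n - 1) → Matrix (Fin m) (Fin n) ℝ,
      ∀ x y, P x y = ∑ p, (x ⬝ᵥ (W p).mulVec y) ^ 2 := by
  obtain ⟨r, W0, hW0⟩ := hsos
  set p00 : Fin m × Fin n := (⟨0, by omega⟩, ⟨0, by omega⟩) with hp00
  set p01 : Fin m × Fin n := (⟨0, by omega⟩, ⟨1, by omega⟩) with hp01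
  set p10 : Fin m × Fin n := (⟨1, by omega⟩, ⟨0, by omega⟩) with hp10
  set p11 : Fin m × Fin n := (⟨1, by omega⟩, ⟨1, by omega⟩) with hp11
  have hne1 : p00 ≠ p01 := by simp [hp00, hp01, Prod.ext_iff, Fin.ext_iff]
  have hne2 : p00 ≠ p10 := by simp [hp00, hp10, Prod.ext_iff, Fin.ext_iff]
  have hne3 : p00 ≠ p11 := by simp [hp00, hp11, Prod.ext_iff, Fin.ext_iff]
  have hne4 : p01 ≠ p10 := by simp [hp01, hp10, Prod.ext_iff, Fin.ext_iff]
  have hne5 : p01 ≠ p11 := by simp [hp01, hp11, Prod.ext_iff, Fin.ext_iff]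
  have hne6 : p10 ≠ p11 := by simp [hp10, hp11, Prod.ext_iff, Fin.ext_iff]
  haveI : Nonempty (Fin m × Fin n) := ⟨p00⟩
  set H : Matrix (Fin m × Fin n) (Fin m × Fin n) ℝ :=
    vecMulVec (sos14_ind p00) (sos14_ind p11) + vecMulVec (sos14_ind p11) (sos14_ind p00)
      - vecMulVec (sos14_ind p01) (sos14_ind p10)
      - vecMulVec (sos14_ind p10) (sos14_ind p01) with hH
  have hHherm : H.IsHermitian := sos14_H_herm p00 p11 p01 p10
  have hHq : ∀ z : Fin m × Fin n → ℝ,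
      z ⬝ᵥ H *ᵥ z = 2 * (z p00 * z p11) - 2 * (z p01 * z p10) := by
    intro z
    rw [hH]
    simp only [sub_mulVec, add_mulVec, dotProduct_sub, dotProduct_add, sos14_quad_vecMulVec,
      sos14_ind_dot]
    ring
  set w : Fin r → (Fin m × Fin n) → ℝ := fun p a => W0 p a.1 a.2 with hw
  set G : Matrix (Fin m × Fin n) (Fin m × Fin n) ℝ := ∑ p, vecMulVec (w p) (w p) with hG
  have hGherm : G.IsHermitian := sos14_G_herm w
  have hGq : ∀ z : Fin m × Fin n → ℝ, z ⬝ᵥ G *ᵥ z = ∑ p, (w p ⬝ᵥ z) ^ 2 := by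
    intro z
    rw [hG, sos14_sum_quad]
    exact Finset.sum_congr rfl fun p _ => by rw [sos14_quad_vecMulVec]; ring
  have hGpsd : G.PosSemidef := by
    refine posSemidef_iff_dotProduct_mulVec.mpr ⟨hGherm, fun z => ?_⟩
    rw [star_trivial, hGq]
    positivity
  have hPG : ∀ x y, P x y
      = (fun a : Fin m × Fin n => x a.1 * y a.2) ⬝ᵥ G *ᵥ (fun a => x a.1 * y a.2) := by
    intro x y
    rw [hW0, hGq]
    exact Finset.sum_congr rfl fun p _ => by rw [sos14_bilin]
  have hHz : ∀ (x : Fin m → ℝ) (y : Fin n → ℝ),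
      (fun a : Fin m × Fin n => x a.1 * y a.2) ⬝ᵥ H *ᵥ (fun a => x a.1 * y a.2) = 0 := by
    intro x y
    rw [hHq]
    simp only [hp00, hp01, hp10, hp11]
    ring
  -- the set of admissible perturbations
  set T : Set ℝ := {t : ℝ | 0 ≤ t ∧ (G + t • H).PosSemidef} with hT
  have hherm_t : ∀ t : ℝ, (G + t • H).IsHermitian := by
    intro t
    have h1 : (t • H).IsHermitian := by
      unfold Matrix.IsHermitian
      rw [conjTranspose_smul, star_trivial, hHherm.eq]
    exact hGherm.add h1
  have hAff : ∀ (t : ℝ) (z : Fin m × Fin n → ℝ),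
      z ⬝ᵥ (G + t • H) *ᵥ z = z ⬝ᵥ G *ᵥ z + t * (z ⬝ᵥ H *ᵥ z) := by
    intro t z
    rw [add_mulVec, dotProduct_add, smul_mulVec, dotProduct_smul, smul_eq_mul]
  have hmemT : ∀ t : ℝ, t ∈ T ↔ 0 ≤ t ∧
      ∀ z : Fin m × Fin n → ℝ, 0 ≤ z ⬝ᵥ G *ᵥ z + t * (z ⬝ᵥ H *ᵥ z) := by
    intro t
    constructor
    · rintro ⟨ht, hpsd⟩
      refine ⟨ht, fun z => ?_⟩
      rw [← hAff]
      simpa using hpsd.dotProduct_mulVec_nonneg z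
    · rintro ⟨ht, h⟩
      refine ⟨ht, posSemidef_iff_dotProduct_mulVec.mpr ⟨hherm_t t, fun z => ?_⟩⟩
      rw [star_trivial, hAff]
      exact h z
  have h0T : (0 : ℝ) ∈ T := by
    rw [hmemT]
    refine ⟨le_refl 0, fun z => ?_⟩
    simpa using hGpsd.dotProduct_mulVec_nonneg z
  have hTclosed : IsClosed T := by
    have : T = Set.Ici (0:ℝ) ∩
        ⋂ z : Fin m × Fin n → ℝ, {t : ℝ | 0 ≤ z ⬝ᵥ G *ᵥ z + t * (z ⬝ᵥ H *ᵥ z)} := by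
      ext t
      simp only [Set.mem_inter_iff, Set.mem_Ici, Set.mem_iInter, Set.mem_setOf_eq, hmemT t]
    rw [this]
    exact isClosed_Ici.inter (isClosed_iInter fun z =>
      isClosed_le continuous_const (by fun_prop))
  -- boundedness
  set z0 : Fin m × Fin n → ℝ := fun a => sos14_ind p01 a + sos14_ind p10 a with hz0
  have hz0vals : z0 p00 = 0 ∧ z0 p11 = 0 ∧ z0 p01 = 1 ∧ z0 p10 = 1 := by
    refine ⟨?_, ?_, ?_, ?_⟩ <;>
      simp [hz0, sos14_ind, hne1, hne2, hne3, hne4, hne5, hne6, Ne.symm hne1, Ne.symm hne2,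
        Ne.symm hne3, Ne.symm hne4, Ne.symm hne5, Ne.symm hne6]
  have hHz0 : z0 ⬝ᵥ H *ᵥ z0 = -2 := by
    rw [hHq, hz0vals.1, hz0vals.2.1, hz0vals.2.2.1, hz0vals.2.2.2]
    ring
  have hTbdd : BddAbove T := by
    refine ⟨(z0 ⬝ᵥ G *ᵥ z0) / 2, fun t ht => ?_⟩
    rw [hmemT] at ht
    have := ht.2 z0
    rw [hHz0] at this
    linarith
  set β : ℝ := sSup T with hβ
  have hβT : β ∈ T := hTclosed.csSup_mem ⟨0, h0T⟩ hTbdd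
  set M : Matrix (Fin m × Fin n) (Fin m × Fin n) ℝ := G + β • H with hM
  have hMpsd : M.PosSemidef := hβT.2
  have hMq : ∀ z : Fin m × Fin n → ℝ, z ⬝ᵥ M *ᵥ z = z ⬝ᵥ G *ᵥ z + β * (z ⬝ᵥ H *ᵥ z) := by
    intro z; rw [hM, hAff]
  -- M is not positive definite
  have hnotPD : ¬ M.PosDef := by
    intro hPD
    obtain ⟨c, hc0, hc⟩ := sos14_posdef_lower M hPD
    have hmem : (β + c) ∈ T := by
      rw [hmemT]
      refine ⟨by linarith [hβT.1], fun z => ?_⟩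
      have h1 := hc z
      rw [hMq z] at h1
      have hHb := hHq z
      have h4 : ∑ i ∈ ({p00, p11, p01, p10} : Finset (Fin m × Fin n)), (z i)^2
          = (z p00)^2 + (z p11)^2 + (z p01)^2 + (z p10)^2 := by
        rw [Finset.sum_insert (by simp [hne3, hne1, hne2]),
          Finset.sum_insert (by simp [hne5.symm, hne6.symm]),
          Finset.sum_insert (by simp [hne4]), Finset.sum_singleton]
        ring
      have hsub : (z p00)^2 + (z p11)^2 + (z p01)^2 + (z p10)^2 ≤ ∑ i, (z i)^2 := by
        rw [← h4]
        exact Finset.sum_le_sum_of_subset_of_nonneg (Finset.subset_univ _)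
          (fun i _ _ => sq_nonneg _)
      nlinarith [mul_nonneg hc0.le (sq_nonneg (z p00 + z p11)),
        mul_nonneg hc0.le (sq_nonneg (z p01 - z p10)),
        mul_le_mul_of_nonneg_left hsub hc0.le]
    have := le_csSup hTbdd hmem
    linarith
  obtain ⟨i₀, hi₀⟩ : ∃ i, hMpsd.1.eigenvalues i = 0 := by
    by_contra hcon
    push_neg at hcon
    exact hnotPD (sos14_posdef_of_eig_pos M hMpsd hcon)
  -- build the final family of matrices
  have hcard : Fintype.card {i : Fin m × Fin n // i ≠ i₀} = m * n - 1 := by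
    have h1 : Fintype.card {i : Fin m × Fin n // i ≠ i₀}
        = Fintype.card (Fin m × Fin n) - 1 := by
      simp [Fintype.card_subtype_compl]
    rw [h1]
    simp
  set σ : {i : Fin m × Fin n // i ≠ i₀} ≃ Fin (m * n - 1) := Fintype.equivFinOfCardEq hcard
    with hσ
  set U : Matrix (Fin m × Fin n) (Fin m × Fin n) ℝ :=
    star (hMpsd.1.eigenvectorUnitary : Matrix (Fin m × Fin n) (Fin m × Fin n) ℝ) with hUdef
  refine ⟨fun q => fun i j => Real.sqrt (hMpsd.1.eigenvalues (σ.symm q).1)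
    * U (σ.symm q).1 (i, j), fun x y => ?_⟩
  set z : Fin m × Fin n → ℝ := fun a => x a.1 * y a.2 with hz
  have hWq : ∀ q : Fin (m * n - 1),
      (x ⬝ᵥ (fun i j => Real.sqrt (hMpsd.1.eigenvalues (σ.symm q).1)
        * U (σ.symm q).1 (i, j) : Matrix (Fin m) (Fin n) ℝ) *ᵥ y)
      = Real.sqrt (hMpsd.1.eigenvalues (σ.symm q).1) * ((U *ᵥ z) (σ.symm q).1) := by
    intro q
    refine (sos14_bilin _ x y).trans ?_
    simp only [dotProduct, mulVec, Finset.mul_sum]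
    exact Finset.sum_congr rfl fun a _ => by ring
  calc P x y = z ⬝ᵥ G *ᵥ z := hPG x y
    _ = z ⬝ᵥ M *ᵥ z := by rw [hMq, hHz x y, mul_zero, add_zero]
    _ = ∑ i, hMpsd.1.eigenvalues i * ((U *ᵥ z) i) ^ 2 := by
        rw [sos14_quad_eigen M hMpsd.1 z]
    _ = ∑ s : {i : Fin m × Fin n // i ≠ i₀},
          hMpsd.1.eigenvalues s.1 * ((U *ᵥ z) s.1) ^ 2 := by
        exact (sos14_sum_subtype i₀
          (fun i => hMpsd.1.eigenvalues i * ((U *ᵥ z) i) ^ 2)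
          (by simp [hi₀])).symm
    _ = ∑ q : Fin (m * n - 1),
          hMpsd.1.eigenvalues (σ.symm q).1 * ((U *ᵥ z) (σ.symm q).1) ^ 2 := by
        rw [← Equiv.sum_comp σ.symm
          (fun s => hMpsd.1.eigenvalues s.1 * ((U *ᵥ z) s.1) ^ 2)]
    _ = ∑ q, (x ⬝ᵥ (fun i j => Real.sqrt (hMpsd.1.eigenvalues (σ.symm q).1)
          * U (σ.symm q).1 (i, j) : Matrix (Fin m) (Fin n) ℝ) *ᵥ y) ^ 2 := by
        refine Finset.sum_congr rfl fun q _ => ?_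
        rw [hWq q, mul_pow, Real.sq_sqrt (hMpsd.eigenvalues_nonneg _)]
end

section
/- The 2×2 biquadratic form P(x,y) = x₁²y₁² + x₂²y₂² + x₁²y₂² cannot be written as a sum of 2 squares of bilinear forms, but equals the sum of 3 squares (x₁y₁)² + (x₂y₂)² + (x₁y₂)². -/
open Matrix

theorem stmt_16 (P : (Fin 2 → ℝ) → (Fin 2 → ℝ) → ℝ)
    (hP : ∀ x y, P x y =
        (x 0) ^ 2 * (y 0) ^ 2 + (x 1) ^ 2 * (y 1) ^ 2 + (x 0) ^ 2 * (y 1) ^ 2) :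
    (¬ ∃ W : Fin 2 → Matrix (Fin 2) (Fin 2) ℝ,
        ∀ x y, P x y = ∑ p, (x ⬝ᵥ (W p).mulVec y) ^ 2) ∧
    (∀ x y, P x y = (x 0 * y 0) ^ 2 + (x 1 * y 1) ^ 2 + (x 0 * y 1) ^ 2) := by
  refine ⟨?_, fun x y => by rw [hP]; ring⟩
  rintro ⟨W, hW⟩
  simp only [hP] at hW
  have e1 := hW ![1,0] ![1,0]
  have e2 := hW ![1,0] ![0,1]
  have e3 := hW ![1,0] ![1,1]
  have e4 := hW ![0,1] ![1,0]
  have e5 := hW ![0,1] ![0,1]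
  have e6 := hW ![1,1] ![0,1]
  have e7 := hW ![1,1] ![1,1]
  simp only [dotProduct, mulVec, Fin.sum_univ_two, Matrix.cons_val_zero,
    Matrix.cons_val_one, Matrix.head_cons] at e1 e2 e3 e4 e5 e6 e7
  norm_num at e1 e2 e3 e4 e5 e6 e7
  set a := W 0 0 0 with ha
  set b := W 0 0 1 with hb
  set e := W 0 1 0 with he'
  set f := W 0 1 1 with hf
  set c := W 1 0 0 with hc
  set d := W 1 0 1 with hd
  set g := W 1 1 0 with hg'
  set h := W 1 1 1 with hh
  -- e4 : 0 = e ^ 2 + g ^ 2, hence e = 0 and g = 0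
  have he : e = 0 := by
    have h0 : e ^ 2 = 0 := by nlinarith [sq_nonneg e, sq_nonneg g]
    exact pow_eq_zero_iff two_ne_zero |>.mp h0
  have hg : g = 0 := by
    have h0 : g ^ 2 = 0 := by nlinarith [sq_nonneg e, sq_nonneg g]
    exact pow_eq_zero_iff two_ne_zero |>.mp h0
  rw [he, hg] at e7
  have h4 : a * b + c * d = 0 := by linear_combination (e1 + e2 - e3) / 2
  have h6 : b * f + d * h = 0 := by linear_combination (e2 + e5 - e6) / 2
  have h5 : a * f + c * h = 0 := by
    linear_combination (e1 + e2 + e5 - e7) / 2 - h4 - h6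
  have contra : (1 : ℝ) = 0 := by
    linear_combination (-(a*d - b*c)^2) * e5 - (b^2 + d^2) * e1 - e2 +
      (a*b + c*d) * h4 + (f*(a*d-b*c)*d - h*(a*d-b*c)*b) * h5 +
      (-f*(a*d-b*c)*c + h*(a*d-b*c)*a) * h6 +
      2 * e1 + 2 * (a^2 + c^2) * e2 + 2 * (a*d - b*c)^2 * e5
  norm_num at contra
end

section
/- The 3×2 biquadratic form P(x,y) = x₁²y₁² + x₂²y₂² + x₃²y₁² + x₁²y₂² cannot be written as a sum of 3 squares of bilinear forms, but equals the sum of 4 squares (x₁y₁)² + (x₂y₂)² + (x₃y₁)² + (x₁y₂)². -/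
open Matrix

private lemma sumsq_eq_zero' {a b c : ℝ} (h : a ^ 2 + b ^ 2 + c ^ 2 = 0) :
    a = 0 ∧ b = 0 ∧ c = 0 := by
  have ha : a ^ 2 = 0 :=
    le_antisymm (by linarith [sq_nonneg b, sq_nonneg c]) (sq_nonneg a)
  have hb : b ^ 2 = 0 :=
    le_antisymm (by linarith [sq_nonneg a, sq_nonneg c]) (sq_nonneg b)
  have hc : c ^ 2 = 0 :=
    le_antisymm (by linarith [sq_nonneg a, sq_nonneg b]) (sq_nonneg c)
  exact ⟨pow_eq_zero_iff two_ne_zero |>.mp ha,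
    pow_eq_zero_iff two_ne_zero |>.mp hb,
    pow_eq_zero_iff two_ne_zero |>.mp hc⟩

set_option maxHeartbeats 1000000 in
theorem stmt_17 (P : (Fin 3 → ℝ) → (Fin 2 → ℝ) → ℝ)
    (hP : ∀ x y, P x y =
        (x 0) ^ 2 * (y 0) ^ 2 + (x 1) ^ 2 * (y 1) ^ 2
        + (x 2) ^ 2 * (y 0) ^ 2 + (x 0) ^ 2 * (y 1) ^ 2) :
    (¬ ∃ W : Fin 3 → Matrix (Fin 3) (Fin 2) ℝ,
        ∀ x y, P x y = ∑ p, (x ⬝ᵥ (W p).mulVec y) ^ 2) ∧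
    (∀ x y, P x y =
        (x 0 * y 0) ^ 2 + (x 1 * y 1) ^ 2 + (x 2 * y 0) ^ 2 + (x 0 * y 1) ^ 2) := by
  constructor
  · rintro ⟨W, hW⟩
    have key : ∀ (x : Fin 3 → ℝ) (y : Fin 2 → ℝ),
        ∑ p, (x ⬝ᵥ (W p).mulVec y) ^ 2 =
        (x 0) ^ 2 * (y 0) ^ 2 + (x 1) ^ 2 * (y 1) ^ 2
        + (x 2) ^ 2 * (y 0) ^ 2 + (x 0) ^ 2 * (y 1) ^ 2 :=
      fun x y => (hW x y).symm.trans (hP x y)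
    have E1 := key ![1,0,0] ![1,0]
    have E2 := key ![0,0,1] ![1,0]
    have E3 := key ![1,0,1] ![1,0]
    have E4 := key ![0,1,0] ![1,0]
    have E5 := key ![0,0,1] ![0,1]
    have E6 := key ![1,0,0] ![0,1]
    have E7 := key ![0,1,0] ![0,1]
    have E8 := key ![1,1,0] ![0,1]
    have E9 := key ![1,0,0] ![1,1]
    have E10 := key ![1,1,0] ![1,1]
    have E11 := key ![1,0,1] ![1,1]
    have E12 := key ![1,1,1] ![1,1]
    norm_num [Matrix.mulVec, dotProduct, Fin.sum_univ_three, Fin.sum_univ_two,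
      Matrix.cons_val_two, Matrix.tail_cons, Matrix.head_cons]
      at E1 E2 E3 E4 E5 E6 E7 E8 E9 E10 E11 E12
    obtain ⟨hb0, hb1, hb2⟩ := sumsq_eq_zero'
      (show W 0 1 0 ^ 2 + W 1 1 0 ^ 2 + W 2 1 0 ^ 2 = 0 by linear_combination E4)
    obtain ⟨hf0, hf1, hf2⟩ := sumsq_eq_zero'
      (show W 0 2 1 ^ 2 + W 1 2 1 ^ 2 + W 2 2 1 ^ 2 = 0 by linear_combination E5)
    simp only [hb0, hb1, hb2, hf0, hf1, hf2] at E10 E11 E12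
    have haa : W 0 0 0 * W 0 0 0 + W 1 0 0 * W 1 0 0 + W 2 0 0 * W 2 0 0 = 1 := by
      linear_combination E1
    have hcc : W 0 2 0 * W 0 2 0 + W 1 2 0 * W 1 2 0 + W 2 2 0 * W 2 2 0 = 1 := by
      linear_combination E2
    have hdd : W 0 0 1 * W 0 0 1 + W 1 0 1 * W 1 0 1 + W 2 0 1 * W 2 0 1 = 1 := by
      linear_combination E6
    have hee : W 0 1 1 * W 0 1 1 + W 1 1 1 * W 1 1 1 + W 2 1 1 * W 2 1 1 = 1 := by
      linear_combination E7
    have hac : W 0 0 0 * W 0 2 0 + W 1 0 0 * W 1 2 0 + W 2 0 0 * W 2 2 0 = 0 := by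
      linear_combination (E3 - E1 - E2) / 2
    have hde : W 0 0 1 * W 0 1 1 + W 1 0 1 * W 1 1 1 + W 2 0 1 * W 2 1 1 = 0 := by
      linear_combination (E8 - E6 - E7) / 2
    have had : W 0 0 0 * W 0 0 1 + W 1 0 0 * W 1 0 1 + W 2 0 0 * W 2 0 1 = 0 := by
      linear_combination (E9 - E1 - E6) / 2
    have hae : W 0 0 0 * W 0 1 1 + W 1 0 0 * W 1 1 1 + W 2 0 0 * W 2 1 1 = 0 := by
      linear_combination (E10 - E1 - E6 - E7) / 2 - had - hde
    have hcd : W 0 2 0 * W 0 0 1 + W 1 2 0 * W 1 0 1 + W 2 2 0 * W 2 0 1 = 0 := by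
      linear_combination (E11 - E1 - E2 - E6) / 2 - hac - had
    have hce : W 0 2 0 * W 0 1 1 + W 1 2 0 * W 1 1 1 + W 2 2 0 * W 2 1 1 = 0 := by
      linear_combination (E12 - E1 - E2 - E6 - E7) / 2 - hac - had - hae - hcd - hde
    set V : Fin 4 → EuclideanSpace ℝ (Fin 3) :=
      ![WithLp.toLp 2 (fun p => W p 0 0), WithLp.toLp 2 (fun p => W p 2 0),
        WithLp.toLp 2 (fun p => W p 0 1), WithLp.toLp 2 (fun p => W p 1 1)] with hVdef
    have hV : Orthonormal ℝ V := by
      rw [orthonormal_iff_ite]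
      intro i j
      fin_cases i <;> fin_cases j <;>
        simp only [hVdef, PiLp.inner_apply, PiLp.toLp_apply, RCLike.inner_apply, conj_trivial,
          Fin.sum_univ_three, Fin.isValue, Matrix.cons_val', Matrix.cons_val_zero,
          Matrix.cons_val_one, Matrix.head_cons, Matrix.head_fin_const, Fin.mk_one,
          Matrix.cons_val_fin_one, Matrix.empty_val', Fin.reduceEq, if_true, if_false,
          Fin.zero_eta, Fin.reduceFinMk, ite_true, ite_false, Matrix.cons_val_two,
          Matrix.tail_cons, Matrix.cons_val_three] <;>
        norm_num <;>
        first
          | linear_combination haa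
          | linear_combination hcc
          | linear_combination hdd
          | linear_combination hee
          | linear_combination hac
          | linear_combination hde
          | linear_combination had
          | linear_combination hae
          | linear_combination hcd
          | linear_combination hce
    have hcard := hV.linearIndependent.fintype_card_le_finrank
    simp [finrank_euclideanSpace_fin] at hcard
  · intro x y
    rw [hP]
    ring
end

section
/- Let A, B be n×n symmetric matrices with B having zero diagonal, m ≥ 1, and suppose I + B − A and I + B + (m−1)A are positive semidefinite. Then for all x ∈ ℝ^m, y ∈ ℝ^n, (xᵀx)(yᵀ(I + B − A)y) + (𝟙ᵀx)²(yᵀAy) ≥ 0. -/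
open Matrix

theorem stmt_18 (m n : ℕ) (hm : 1 ≤ m)
    (A B : Matrix (Fin n) (Fin n) ℝ) (hA : A.IsSymm) (hB : B.IsSymm)
    (hBdiag : ∀ j, B j j = 0)
    (h1 : ((1 : Matrix (Fin n) (Fin n) ℝ) + B - A).PosSemidef)
    (h2 : ((1 : Matrix (Fin n) (Fin n) ℝ) + B + ((m : ℝ) - 1) • A).PosSemidef) :
    ∀ (x : Fin m → ℝ) (y : Fin n → ℝ),
      0 ≤ (x ⬝ᵥ x) * (y ⬝ᵥ ((1 : Matrix (Fin n) (Fin n) ℝ) + B - A).mulVec y)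
          + (∑ i, x i) ^ 2 * (y ⬝ᵥ A.mulVec y) := by
  intro x y
  have hq1 : 0 ≤ y ⬝ᵥ ((1 : Matrix (Fin n) (Fin n) ℝ) + B - A).mulVec y := by
    simpa using h1.dotProduct_mulVec_nonneg y
  have hq2 : 0 ≤ y ⬝ᵥ ((1 : Matrix (Fin n) (Fin n) ℝ) + B + ((m : ℝ) - 1) • A).mulVec y := by
    simpa using h2.dotProduct_mulVec_nonneg y
  have hsplit : y ⬝ᵥ ((1 : Matrix (Fin n) (Fin n) ℝ) + B + ((m : ℝ) - 1) • A).mulVec y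
      = y ⬝ᵥ ((1 : Matrix (Fin n) (Fin n) ℝ) + B - A).mulVec y + (m : ℝ) * (y ⬝ᵥ A.mulVec y) := by
    have : ((1 : Matrix (Fin n) (Fin n) ℝ) + B + ((m : ℝ) - 1) • A)
        = ((1 : Matrix (Fin n) (Fin n) ℝ) + B - A) + (m : ℝ) • A := by
      ext i j; simp [Matrix.add_apply, Matrix.sub_apply, Matrix.smul_apply]; ring
    rw [this, add_mulVec, dotProduct_add, smul_mulVec, dotProduct_smul, smul_eq_mul]
  have hcs : (∑ i, x i) ^ 2 ≤ (m : ℝ) * (x ⬝ᵥ x) := by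
    have := sq_sum_le_card_mul_sum_sq (s := Finset.univ) (f := x)
    simpa [dotProduct, sq, Finset.card_univ] using this
  have hxx : 0 ≤ x ⬝ᵥ x := Finset.sum_nonneg fun i _ => mul_self_nonneg (x i)
  have hs : 0 ≤ (∑ i, x i) ^ 2 := sq_nonneg _
  rcases le_or_gt 0 (y ⬝ᵥ A.mulVec y) with ha | ha
  · positivity
  · nlinarith [mul_le_mul_of_nonpos_right hcs ha.le]
end
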